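/- arXiv:2503.02822 — 9 statements merged into one kernel-verified Lean document; each statement's English description precedes it below -/
import Mathlib

section
/- For integers r ≥ 2 and 1 ≤ a ≤ r, and any vector y = (y_1,...,y_r) of nonnegative reals, the polynomial h_r(y) := ∏_{1 ≤ ℓ ≤ j ≤ r} (y_ℓ + y_{ℓ+1} + ... + y_j) satisfies h_r(y)^{r-1} ≥ y_a^{r(r-1)/2} · h_{r-1}(ŷ_a)^r, where ŷ_a ∈ ℝ^{r-1} is the vector y with the a-th coordinate omitted. -/
open Finset

/-- `h_r(y) = ∏_{1 ≤ ℓ ≤ j ≤ r} (y_ℓ + ⋯ + y_j)`. -/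
noncomputable def hpoly (r : ℕ) (y : Fin r → ℝ) : ℝ :=
  ∏ p ∈ Finset.univ.filter (fun p : Fin r × Fin r => p.1 ≤ p.2),
    ∑ i ∈ Finset.Icc p.1 p.2, y i

noncomputable def Sz (z : ℕ → ℝ) (p : ℕ × ℕ) : ℝ := ∑ i ∈ Finset.Icc p.1 p.2, z i

def Tset (r : ℕ) : Finset (ℕ × ℕ) := (range r ×ˢ range r).filter (fun p => p.1 ≤ p.2)

lemma mem_Tset {r : ℕ} {p : ℕ × ℕ} : p ∈ Tset r ↔ p.1 < r ∧ p.2 < r ∧ p.1 ≤ p.2 := by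
  simp [Tset, Finset.mem_filter, Finset.mem_product]; tauto

lemma Sz_nonneg {z : ℕ → ℝ} (hz : ∀ n, 0 ≤ z n) (p : ℕ × ℕ) : 0 ≤ Sz z p :=
  Finset.sum_nonneg fun i _ => hz i

lemma Sz_mono {z : ℕ → ℝ} (hz : ∀ n, 0 ≤ z n) {p p' : ℕ × ℕ} (h1 : p'.1 ≤ p.1)
    (h2 : p.2 ≤ p'.2) : Sz z p ≤ Sz z p' :=
  Finset.sum_le_sum_of_subset_of_nonneg (Finset.Icc_subset_Icc h1 h2) (fun i _ _ => hz i)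

lemma le_Sz {z : ℕ → ℝ} (hz : ∀ n, 0 ≤ z n) {A l j : ℕ} (h1 : l ≤ A) (h2 : A ≤ j) :
    z A ≤ Sz z (l, j) :=
  Finset.single_le_sum (fun i _ => hz i) (by simp [Finset.mem_Icc]; omega)

lemma hpoly_eq (r : ℕ) (y : Fin r → ℝ) (z : ℕ → ℝ) (hz : ∀ i : Fin r, z i.val = y i) :
    hpoly r y = ∏ p ∈ Tset r, Sz z p := by
  have himg : Tset r = (Finset.univ.filter (fun p : Fin r × Fin r => p.1 ≤ p.2)).map
      (Fin.valEmbedding.prodMap Fin.valEmbedding) := by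
    ext p
    simp only [mem_Tset, Finset.mem_map, Finset.mem_filter, Finset.mem_univ, true_and,
      Function.Embedding.coe_prodMap, Fin.valEmbedding_apply]
    constructor
    · rintro ⟨h1, h2, h3⟩
      exact ⟨(⟨p.1, h1⟩, ⟨p.2, h2⟩), h3, by simp [Prod.ext_iff]⟩
    · rintro ⟨q, hq, hq2⟩
      subst hq2
      exact ⟨q.1.isLt, q.2.isLt, hq⟩
  rw [himg, Finset.prod_map, hpoly]
  refine Finset.prod_congr rfl fun q _ => ?_
  simp only [Function.Embedding.coe_prodMap, Fin.valEmbedding_apply, Sz, Prod.map]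
  rw [← Fin.map_valEmbedding_Icc, Finset.sum_map]
  exact Finset.sum_congr rfl fun i _ => (hz i).symm

def skipf (A n : ℕ) : ℕ := if n < A then n else n + 1

lemma skipf_inj (A : ℕ) : Function.Injective (skipf A) := by
  intro x y h; unfold skipf at h; split_ifs at h <;> omega

def q1f (A : ℕ) (p : ℕ × ℕ) : ℕ × ℕ := if p.1 < A then (p.1, A) else (A, p.2)

def q2f (A : ℕ) (p : ℕ × ℕ) : ℕ × ℕ :=
  if p.2 < A then (p.2 + 1, A) else if A < p.1 then (A, p.1 - 1) else (A, p.2)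

section main
variable {m A : ℕ} {z : ℕ → ℝ}

-- the "inner" pairs (both endpoints ≠ A) and "boundary" pairs
lemma Tin_eq (hA : A ≤ m) :
    (Tset (m + 1)).filter (fun p => ¬(p.1 = A ∨ p.2 = A))
      = (Tset m).image (Prod.map (skipf A) (skipf A)) := by
  ext p
  simp only [Finset.mem_filter, mem_Tset, Finset.mem_image, Prod.map, skipf, Prod.ext_iff]
  constructor
  · rintro ⟨⟨h1, h2, h3⟩, h4⟩
    push_neg at h4
    refine ⟨(if p.1 < A then p.1 else p.1 - 1, if p.2 < A then p.2 else p.2 - 1), ?_, ?_⟩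
    · constructor
      · split_ifs <;> omega
      · constructor
        · split_ifs <;> omega
        · split_ifs <;> omega
    · constructor
      · split_ifs <;> simp <;> omega
      · split_ifs <;> simp <;> omega
  · rintro ⟨q, ⟨h1, h2, h3⟩, h4, h5⟩
    constructor
    · refine ⟨?_, ?_, ?_⟩
      · split_ifs at h4 <;> omega
      · split_ifs at h5 <;> omega
      · split_ifs at h4 <;> split_ifs at h5 <;> omega
    · push_neg
      constructor
      · split_ifs at h4 <;> omega
      · split_ifs at h5 <;> omega

lemma Sz_skip_le (hz : ∀ n, 0 ≤ z n) (p : ℕ × ℕ) :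
    Sz (z ∘ skipf A) p ≤ Sz z (Prod.map (skipf A) (skipf A) p) := by
  have h1 : Sz (z ∘ skipf A) p = ∑ j ∈ (Finset.Icc p.1 p.2).image (skipf A), z j := by
    rw [Finset.sum_image (fun x _ y _ h => skipf_inj A h)]; rfl
  rw [h1]
  apply Finset.sum_le_sum_of_subset_of_nonneg
  · intro j hj
    simp only [Finset.mem_image, Finset.mem_Icc] at hj ⊢
    obtain ⟨i, ⟨hi1, hi2⟩, rfl⟩ := hj
    unfold skipf Prod.map
    constructor
    · simp only []
      split_ifs <;> omega
    · simp only []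
      split_ifs <;> omega
  · exact fun i _ _ => hz i

lemma stepA (hz : ∀ n, 0 ≤ z n) (hA : A ≤ m) :
    ∏ p ∈ Tset m, Sz (z ∘ skipf A) p
      ≤ ∏ p ∈ (Tset (m + 1)).filter (fun p => ¬(p.1 = A ∨ p.2 = A)), Sz z p := by
  rw [Tin_eq hA, Finset.prod_image ?hinj]
  case hinj =>
    intro x _ y _ h
    simp only [Prod.map, Prod.ext_iff] at h
    exact Prod.ext (skipf_inj A h.1) (skipf_inj A h.2)
  exact Finset.prod_le_prod (fun p _ => Sz_nonneg (fun n => hz _) p) (fun p _ => Sz_skip_le hz p)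

lemma sum_Icc_split (z : ℕ → ℝ) {l A j : ℕ} (h1 : l ≤ A) (h2 : A ≤ j) :
    Sz z (l, j) = Sz z (l, A) + ∑ i ∈ Finset.Ioc A j, z i := by
  have hd : Disjoint (Finset.Icc l A) (Finset.Ioc A j) := by
    rw [Finset.disjoint_left]
    intro x hx hx'
    simp only [Finset.mem_Icc, Finset.mem_Ioc] at hx hx'
    omega
  have he : Finset.Icc l j = Finset.Icc l A ∪ Finset.Ioc A j := by
    ext x
    simp only [Finset.mem_union, Finset.mem_Icc, Finset.mem_Ioc]
    omega
  show (∑ i ∈ Finset.Icc l j, z i) = _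
  rw [he, Finset.sum_union hd]
  rfl

lemma stepB_factor (hz : ∀ n, 0 ≤ z n) {p : ℕ × ℕ}
    (hp : p ∈ (Tset (m + 1)).filter (fun p => ¬(p.1 = A ∨ p.2 = A))) (hA : A ≤ m) :
    z A * Sz z p ≤ Sz z (q1f A p) * Sz z (q2f A p) := by
  simp only [Finset.mem_filter, mem_Tset] at hp
  obtain ⟨⟨h1, h2, h3⟩, h4⟩ := hp
  push_neg at h4
  obtain ⟨hne1, hne2⟩ := h4
  unfold q1f q2f
  rcases lt_trichotomy p.2 A with hc | hc | hc
  · -- p.2 < A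
    rw [if_pos (show p.1 < A by omega), if_pos hc]
    have ha1 : z A ≤ Sz z (p.2 + 1, A) := le_Sz hz (by omega) le_rfl
    have ha2 : Sz z p ≤ Sz z (p.1, A) := Sz_mono hz le_rfl (by simp; omega)
    have := mul_le_mul ha1 ha2 (Sz_nonneg hz p) ((hz A).trans ha1)
    linarith [this]
  · omega
  · rcases lt_trichotomy p.1 A with hd | hd | hd
    · -- p.1 < A < p.2 : the overlapping case
      rw [if_pos hd, if_neg (by omega), if_neg (by omega)]
      have e1 : Sz z p = Sz z (p.1, A) + ∑ i ∈ Finset.Ioc A p.2, z i := by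
        have := sum_Icc_split z (le_of_lt hd) (le_of_lt hc)
        simpa using this
      have e2 : Sz z (A, p.2) = z A + ∑ i ∈ Finset.Ioc A p.2, z i := by
        have := sum_Icc_split z (le_refl A) (le_of_lt hc)
        simpa [Sz] using this
      have hAle : z A ≤ Sz z (p.1, A) := le_Sz hz (le_of_lt hd) le_rfl
      have hD : (0:ℝ) ≤ ∑ i ∈ Finset.Ioc A p.2, z i := Finset.sum_nonneg fun i _ => hz i
      nlinarith [hz A]
    · omega
    · -- A < p.1
      rw [if_neg (show ¬ p.1 < A by omega), if_neg (show ¬ p.2 < A by omega), if_pos hd]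
      have ha1 : z A ≤ Sz z (A, p.1 - 1) := le_Sz hz le_rfl (by omega)
      have ha2 : Sz z p ≤ Sz z (A, p.2) := Sz_mono hz (by simp; omega) le_rfl
      have := mul_le_mul ha1 ha2 (Sz_nonneg hz p) ((hz A).trans ha1)
      linarith [this]

lemma count_q1_a (hA : A ≤ m) {L : ℕ} (hL : L < A) :
    ((Tset (m + 1)).filter (fun p => ¬(p.1 = A ∨ p.2 = A))).filter
        (fun p => (L, A) = q1f A p) = ((Finset.Icc L m).erase A).image (fun j => (L, j)) := by
  ext ⟨x, y⟩
  simp only [Finset.mem_filter, mem_Tset, Finset.mem_image, Finset.mem_erase, Finset.mem_Icc,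
    q1f, Prod.ext_iff]
  constructor
  · rintro ⟨⟨⟨h1, h2, h3⟩, h4⟩, h5⟩
    push_neg at h4
    split_ifs at h5 with h <;> simp only [Prod.mk.injEq] at h5 <;>
      exact ⟨y, by omega, by omega, by omega⟩
  · rintro ⟨j, ⟨hj1, hj2, hj3⟩, hx, hy⟩
    subst hx; subst hy
    refine ⟨⟨⟨by omega, by omega, by omega⟩, by push_neg; omega⟩, ?_⟩
    rw [if_pos hL]
    exact ⟨rfl, rfl⟩

lemma count_q2_a (hA : A ≤ m) {L : ℕ} (hL : L < A) :
    ((Tset (m + 1)).filter (fun p => ¬(p.1 = A ∨ p.2 = A))).filter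
        (fun p => (L, A) = q2f A p) = (Finset.range L).image (fun i => (i, L - 1)) := by
  ext ⟨x, y⟩
  simp only [Finset.mem_filter, mem_Tset, Finset.mem_image, Finset.mem_range,
    q2f, Prod.ext_iff]
  constructor
  · rintro ⟨⟨⟨h1, h2, h3⟩, h4⟩, h5⟩
    push_neg at h4
    split_ifs at h5 with h h' <;> simp only [Prod.mk.injEq] at h5 <;>
      exact ⟨x, by omega, by omega, by omega⟩
  · rintro ⟨i, hi, hx, hy⟩
    subst hx; subst hy
    refine ⟨⟨⟨by omega, by omega, by omega⟩, by push_neg; omega⟩, ?_⟩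
    rw [if_pos (show L - 1 < A by omega)]
    exact ⟨by show L = L - 1 + 1; omega, rfl⟩

lemma count_q1_b (hA : A ≤ m) {J : ℕ} (hJ1 : A < J) (hJ2 : J ≤ m) :
    ((Tset (m + 1)).filter (fun p => ¬(p.1 = A ∨ p.2 = A))).filter
        (fun p => (A, J) = q1f A p) = (Finset.Ioc A J).image (fun i => (i, J)) := by
  ext ⟨x, y⟩
  simp only [Finset.mem_filter, mem_Tset, Finset.mem_image, Finset.mem_Ioc,
    q1f, Prod.ext_iff]
  constructor
  · rintro ⟨⟨⟨h1, h2, h3⟩, h4⟩, h5⟩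
    push_neg at h4
    split_ifs at h5 with h <;> simp only [Prod.mk.injEq] at h5 <;>
      exact ⟨x, by omega, by omega, by omega⟩
  · rintro ⟨i, hi, hx, hy⟩
    subst hx; subst hy
    refine ⟨⟨⟨by omega, by omega, by omega⟩, by push_neg; omega⟩, ?_⟩
    rw [if_neg (show ¬ i < A by omega)]
    exact ⟨rfl, rfl⟩

lemma count_q2_b (hA : A ≤ m) {J : ℕ} (hJ1 : A < J) (hJ2 : J ≤ m) :
    ((Tset (m + 1)).filter (fun p => ¬(p.1 = A ∨ p.2 = A))).filter
        (fun p => (A, J) = q2f A p)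
      = (Finset.range A ∪ Finset.Icc (J + 1) m).image
          (fun k => if k < A then (k, J) else (J + 1, k)) := by
  ext ⟨x, y⟩
  simp only [Finset.mem_filter, mem_Tset, Finset.mem_image, Finset.mem_union,
    Finset.mem_range, Finset.mem_Icc, q2f, Prod.ext_iff]
  constructor
  · rintro ⟨⟨⟨h1, h2, h3⟩, h4⟩, h5⟩
    push_neg at h4
    split_ifs at h5 with h h' <;> simp only [Prod.mk.injEq] at h5
    · omega
    · -- A < x, (A, x-1) = (A, J), so x = J + 1, witness k = y
      refine ⟨y, by omega, ?_⟩
      rw [if_neg (show ¬ y < A by omega)]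
      exact ⟨by show J + 1 = x; omega, rfl⟩
    · -- x < A, (A, y) = (A, J), witness k = x
      refine ⟨x, by omega, ?_⟩
      rw [if_pos (show x < A by omega)]
      exact ⟨rfl, by show J = y; omega⟩
  · rintro ⟨k, hk, hxy⟩
    by_cases hkA : k < A
    · rw [if_pos hkA] at hxy
      obtain ⟨hx, hy⟩ := hxy
      refine ⟨⟨⟨by omega, by omega, by omega⟩, by push_neg; omega⟩, ?_⟩
      rw [if_neg (show ¬ y < A by omega), if_neg (show ¬ A < x by omega)]
      exact ⟨rfl, by omega⟩
    · rw [if_neg hkA] at hxy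
      obtain ⟨hx, hy⟩ := hxy
      refine ⟨⟨⟨by omega, by omega, by omega⟩, by push_neg; omega⟩, ?_⟩
      rw [if_neg (show ¬ y < A by omega), if_pos (show A < x by omega)]
      exact ⟨rfl, by omega⟩

lemma count_q1_c (hA : A ≤ m) :
    ((Tset (m + 1)).filter (fun p => ¬(p.1 = A ∨ p.2 = A))).filter
        (fun p => (A, A) = q1f A p) = ∅ := by
  ext ⟨x, y⟩
  simp only [Finset.mem_filter, mem_Tset, Finset.notMem_empty, iff_false, q1f, Prod.ext_iff]
  rintro ⟨⟨⟨h1, h2, h3⟩, h4⟩, h5⟩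
  push_neg at h4
  split_ifs at h5 with h <;> simp only [Prod.mk.injEq] at h5 <;> omega

lemma count_q2_c (hA : A ≤ m) :
    ((Tset (m + 1)).filter (fun p => ¬(p.1 = A ∨ p.2 = A))).filter
        (fun p => (A, A) = q2f A p)
      = (Finset.range A ∪ Finset.Icc (A + 1) m).image
          (fun k => if k < A then (k, A - 1) else (A + 1, k)) := by
  ext ⟨x, y⟩
  simp only [Finset.mem_filter, mem_Tset, Finset.mem_image, Finset.mem_union,
    Finset.mem_range, Finset.mem_Icc, q2f, Prod.ext_iff]
  constructor
  · rintro ⟨⟨⟨h1, h2, h3⟩, h4⟩, h5⟩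
    push_neg at h4
    split_ifs at h5 with h h' <;> simp only [Prod.mk.injEq] at h5
    · -- y < A, (y+1, A) = (A, A): y = A - 1, witness k = x
      refine ⟨x, by omega, ?_⟩
      rw [if_pos (show x < A by omega)]
      exact ⟨rfl, by show A - 1 = y; omega⟩
    · -- A < x, (A, x - 1) = (A, A): x = A + 1, witness k = y
      refine ⟨y, by omega, ?_⟩
      rw [if_neg (show ¬ y < A by omega)]
      exact ⟨by show A + 1 = x; omega, rfl⟩
    · omega
  · rintro ⟨k, hk, hxy⟩
    by_cases hkA : k < A
    · rw [if_pos hkA] at hxy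
      obtain ⟨hx, hy⟩ := hxy
      refine ⟨⟨⟨by omega, by omega, by omega⟩, by push_neg; omega⟩, ?_⟩
      rw [if_pos (show y < A by omega)]
      exact ⟨by omega, rfl⟩
    · rw [if_neg hkA] at hxy
      obtain ⟨hx, hy⟩ := hxy
      refine ⟨⟨⟨by omega, by omega, by omega⟩, by push_neg; omega⟩, ?_⟩
      rw [if_neg (show ¬ y < A by omega), if_pos (show A < x by omega)]
      exact ⟨rfl, by omega⟩

lemma count_total (hA : A ≤ m) {q : ℕ × ℕ}
    (hq : q ∈ (Tset (m + 1)).filter (fun p => p.1 = A ∨ p.2 = A)) :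
    ∑ p ∈ (Tset (m + 1)).filter (fun p => ¬(p.1 = A ∨ p.2 = A)),
      ((if q = q1f A p then 1 else 0) + (if q = q2f A p then 1 else 0)) = m := by
  rw [Finset.sum_add_distrib, ← Finset.card_filter, ← Finset.card_filter]
  simp only [Finset.mem_filter, mem_Tset] at hq
  obtain ⟨⟨h1, h2, h3⟩, h4⟩ := hq
  obtain ⟨u, v⟩ := q
  simp only at h1 h2 h3 h4
  rcases Nat.lt_trichotomy u A with hu | hu | hu
  · -- case (a): u = L < A, v = A
    have hv : v = A := by omega
    subst hv
    rw [count_q1_a hA hu, count_q2_a hA hu]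
    rw [Finset.card_image_of_injOn (fun a _ b _ h => by
      simpa using congrArg Prod.snd h)]
    rw [Finset.card_image_of_injOn (fun a _ b _ h => by
      simpa using congrArg Prod.fst h)]
    rw [Finset.card_erase_of_mem (by simp [Finset.mem_Icc]; omega)]
    simp [Nat.card_Icc]
    omega
  · -- u = A
    subst hu
    rcases Nat.lt_or_ge u v with hv | hv
    · -- case (b)
      rw [count_q1_b hA hv (by omega), count_q2_b hA hv (by omega)]
      rw [Finset.card_image_of_injOn (fun a _ b _ h => by
        simpa using congrArg Prod.fst h)]
      rw [Finset.card_image_of_injOn ?hinj]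
      case hinj =>
        intro a ha b hb h
        simp only [Finset.coe_union, Set.mem_union, Finset.coe_range, Set.mem_Iio,
          Finset.coe_Icc, Set.mem_Icc] at ha hb
        simp only at h
        split_ifs at h <;> simp only [Prod.mk.injEq] at h <;> omega
      rw [Finset.card_union_of_disjoint (by
        rw [Finset.disjoint_left]; intro x hx hx'
        simp [Finset.mem_range, Finset.mem_Icc] at hx hx'; omega)]
      simp [Nat.card_Ioc, Nat.card_Icc]
      omega
    · -- case (c): v = u = A
      have hv' : v = u := by omega
      subst hv'
      rw [count_q1_c hA, count_q2_c hA]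
      rw [Finset.card_image_of_injOn ?hinj2]
      case hinj2 =>
        intro a ha b hb h
        simp only [Finset.coe_union, Set.mem_union, Finset.coe_range, Set.mem_Iio,
          Finset.coe_Icc, Set.mem_Icc] at ha hb
        simp only at h
        split_ifs at h <;> simp only [Prod.mk.injEq] at h <;> omega
      rw [Finset.card_union_of_disjoint (by
        rw [Finset.disjoint_left]; intro x hx hx'
        simp [Finset.mem_range, Finset.mem_Icc] at hx hx'; omega)]
      simp [Nat.card_Icc]
      omega
  · omega

lemma q_mem_bd (hA : A ≤ m) {p : ℕ × ℕ}
    (hp : p ∈ (Tset (m + 1)).filter (fun p => ¬(p.1 = A ∨ p.2 = A))) :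
    q1f A p ∈ (Tset (m + 1)).filter (fun p => p.1 = A ∨ p.2 = A)
    ∧ q2f A p ∈ (Tset (m + 1)).filter (fun p => p.1 = A ∨ p.2 = A)
    ∧ q1f A p ≠ q2f A p := by
  simp only [Finset.mem_filter, mem_Tset] at hp ⊢
  obtain ⟨⟨h1, h2, h3⟩, h4⟩ := hp
  push_neg at h4
  unfold q1f q2f
  refine ⟨?_, ?_, ?_⟩
  · split_ifs with h <;> simp <;> omega
  · split_ifs with h h' <;> simp <;> omega
  · split_ifs with h h' h'' <;> simp only [ne_eq, Prod.mk.injEq, not_and] <;> omega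

lemma stepC (hz : ∀ n, 0 ≤ z n) (hA : A ≤ m) :
    ∏ p ∈ (Tset (m + 1)).filter (fun p => ¬(p.1 = A ∨ p.2 = A)),
        (Sz z (q1f A p) * Sz z (q2f A p))
      = (∏ q ∈ (Tset (m + 1)).filter (fun p => p.1 = A ∨ p.2 = A), Sz z q) ^ m := by
  set Tin := (Tset (m + 1)).filter (fun p => ¬(p.1 = A ∨ p.2 = A)) with hTin
  set Tbd := (Tset (m + 1)).filter (fun p => p.1 = A ∨ p.2 = A) with hTbd
  have key : ∀ p ∈ Tin, Sz z (q1f A p) * Sz z (q2f A p)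
      = ∏ q ∈ Tbd, Sz z q ^ ((if q = q1f A p then 1 else 0) + (if q = q2f A p then 1 else 0)) := by
    intro p hp
    obtain ⟨hm1, hm2, hne⟩ := q_mem_bd hA hp
    rw [Finset.prod_congr rfl (fun q _ => pow_add (Sz z q) _ _), Finset.prod_mul_distrib]
    congr 1
    · have : ∀ q ∈ Tbd, Sz z q ^ (if q = q1f A p then 1 else 0)
          = (if q = q1f A p then Sz z q else 1) := by
        intro q _; split_ifs <;> simp
      rw [Finset.prod_congr rfl this, Finset.prod_ite_eq' Tbd (q1f A p) (Sz z), if_pos hm1]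
    · have : ∀ q ∈ Tbd, Sz z q ^ (if q = q2f A p then 1 else 0)
          = (if q = q2f A p then Sz z q else 1) := by
        intro q _; split_ifs <;> simp
      rw [Finset.prod_congr rfl this, Finset.prod_ite_eq' Tbd (q2f A p) (Sz z), if_pos hm2]
  rw [Finset.prod_congr rfl key, Finset.prod_comm]
  rw [Finset.prod_congr rfl (fun q _ => Finset.prod_pow_eq_pow_sum Tin _ (Sz z q))]
  rw [Finset.prod_congr rfl (fun q hq => by rw [count_total hA (hTbd ▸ hq)]), Finset.prod_pow]

lemma aux_sum (n : ℕ) : ∑ i ∈ Finset.range n, (n - i) = n * (n + 1) / 2 := by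
  induction n with
  | zero => simp
  | succ k ih =>
    rw [Finset.sum_range_succ']
    have h1 : ∀ i ∈ Finset.range k, k + 1 - (i + 1) = k - i := fun i _ => by omega
    rw [Finset.sum_congr rfl h1, ih]
    have e : (k + 1) * (k + 1 + 1) = k * (k + 1) + 2 * (k + 1) := by ring
    omega

lemma card_Tset (n : ℕ) : (Tset n).card = n * (n + 1) / 2 := by
  rw [Tset, Finset.card_filter, Finset.sum_product]
  have h1 : ∀ i ∈ Finset.range n,
      (∑ j ∈ Finset.range n, if (i, j).1 ≤ (i, j).2 then 1 else 0) = n - i := by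
    intro i hi
    rw [← Finset.card_filter]
    have : (Finset.range n).filter (fun j => (i, j).1 ≤ (i, j).2) = Finset.Ico i n := by
      ext x; simp [Finset.mem_Ico]; omega
    rw [this, Nat.card_Ico]
  rw [Finset.sum_congr rfl h1, aux_sum]

end main

/-- Lemma 2.1: for `r = m+1 ≥ 2`, `h_r(y)^{r-1} ≥ y_a^{r(r-1)/2} h_{r-1}(ŷ_a)^r`. -/
theorem stmt0 (m : ℕ) (hm : 1 ≤ m) (y : Fin (m + 1) → ℝ) (hy : ∀ i, 0 ≤ y i)
    (a : Fin (m + 1)) :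
    y a ^ ((m + 1) * m / 2) * hpoly m (y ∘ a.succAbove) ^ (m + 1)
      ≤ hpoly (m + 1) y ^ m := by
  set A : ℕ := (a : ℕ) with hAdef
  have hA : A ≤ m := by omega
  set z : ℕ → ℝ := fun n => if h : n < m + 1 then y ⟨n, h⟩ else 0 with hzdef
  have hz : ∀ n, 0 ≤ z n := by
    intro n; simp only [hzdef]; split
    · exact hy _
    · exact le_refl 0
  have hzy : ∀ i : Fin (m + 1), z i.val = y i := by
    intro i; simp only [hzdef, i.isLt, dif_pos, Fin.eta]
  have hzA : z A = y a := by rw [hAdef]; simpa using hzy a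
  have hval : ∀ i : Fin m, ((a.succAbove i : Fin (m + 1)) : ℕ) = skipf A i.val := by
    intro i
    by_cases h : (i : ℕ) < A
    · rw [Fin.succAbove, if_pos (by rw [Fin.lt_def]; simpa using h), skipf, if_pos h,
        Fin.coe_castSucc]
    · rw [Fin.succAbove, if_neg (by rw [Fin.lt_def]; simpa using h), skipf, if_neg h,
        Fin.val_succ]
  have h1 : hpoly (m + 1) y = ∏ p ∈ Tset (m + 1), Sz z p := hpoly_eq _ y z hzy
  have h2 : hpoly m (y ∘ a.succAbove) = ∏ p ∈ Tset m, Sz (z ∘ skipf A) p := by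
    refine hpoly_eq m _ (z ∘ skipf A) fun i => ?_
    simp only [Function.comp_apply]
    rw [← hval i]
    exact hzy _
  set Tin := (Tset (m + 1)).filter (fun p => ¬(p.1 = A ∨ p.2 = A)) with hTin
  set Tbd := (Tset (m + 1)).filter (fun p => p.1 = A ∨ p.2 = A) with hTbd
  set P := ∏ p ∈ Tin, Sz z p with hP
  set Q := ∏ q ∈ Tbd, Sz z q with hQ
  have hP0 : 0 ≤ P := Finset.prod_nonneg fun p _ => Sz_nonneg hz p
  have hQ0 : 0 ≤ Q := Finset.prod_nonneg fun p _ => Sz_nonneg hz p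
  have hsplit : hpoly (m + 1) y = Q * P := by
    rw [h1, ← Finset.prod_filter_mul_prod_filter_not (Tset (m + 1))
      (fun p => p.1 = A ∨ p.2 = A) (Sz z)]
  have hcard : Tin.card = (m + 1) * m / 2 := by
    rw [hTin, Tin_eq hA, Finset.card_image_of_injOn (fun x _ u _ h => by
      simp only [Prod.map, Prod.ext_iff] at h
      exact Prod.ext (skipf_inj A h.1) (skipf_inj A h.2))]
    rw [card_Tset, Nat.mul_comm]
  have hB : z A ^ Tin.card * P ≤ Q ^ m := by
    calc z A ^ Tin.card * P = ∏ p ∈ Tin, (z A * Sz z p) := by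
          rw [Finset.prod_mul_distrib, Finset.prod_const]
      _ ≤ ∏ p ∈ Tin, (Sz z (q1f A p) * Sz z (q2f A p)) :=
          Finset.prod_le_prod (fun p _ => mul_nonneg (hz A) (Sz_nonneg hz p))
            (fun p hp => stepB_factor hz (hTin ▸ hp) hA)
      _ = Q ^ m := stepC hz hA
  have hA2 : hpoly m (y ∘ a.succAbove) ≤ P := by
    rw [h2]; exact stepA hz hA
  have h0 : 0 ≤ hpoly m (y ∘ a.succAbove) := by
    rw [h2]; exact Finset.prod_nonneg fun p _ => Sz_nonneg (fun n => hz _) p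
  calc y a ^ ((m + 1) * m / 2) * hpoly m (y ∘ a.succAbove) ^ (m + 1)
      ≤ y a ^ ((m + 1) * m / 2) * P ^ (m + 1) := by
        apply mul_le_mul_of_nonneg_left (pow_le_pow_left₀ h0 hA2 _)
          (pow_nonneg (hy a) _)
    _ = P ^ m * (z A ^ Tin.card * P) := by rw [hzA, hcard]; ring
    _ ≤ P ^ m * Q ^ m := mul_le_mul_of_nonneg_left hB (pow_nonneg hP0 m)
    _ = (Q * P) ^ m := by rw [mul_pow]; ring
    _ = hpoly (m + 1) y ^ m := by rw [hsplit]
end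

section
/- Let the rth finite difference in the last variable with step h be Δ_h^r applied to a_r(k) := (1/c_r) ∏_{1 ≤ ℓ ≤ j ≤ r} (k_ℓ+...+k_j). Then Δ_h^r(a_r(k)) = a_{r-1}(k_1,...,k_{r-1}) · h^r, where Δ_h(f)(k) := f(k_1,...,k_{r-1}, k_r + h) − f(k). -/
open Finset

/-- `c_r = r!(r-1)!⋯1!`. -/
def crconst (r : ℕ) : ℕ := ∏ i ∈ Finset.range r, Nat.factorial (i + 1)

/-- The Weyl dimension polynomial `a_r(k) = h_r(k)/c_r`. -/
noncomputable def apoly (r : ℕ) (y : Fin r → ℝ) : ℝ := hpoly r y / crconst r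

/-- The finite difference operator with step `h` (in one variable). -/
noncomputable def fdiff (h : ℝ) (f : ℝ → ℝ) : ℝ → ℝ := fun t => f (t + h) - f t

open Polynomial in
lemma hasseDeriv_of_natDegree_le (p : ℝ[X]) (j : ℕ) (hp : p.natDegree ≤ j) :
    Polynomial.hasseDeriv j p = Polynomial.C (p.coeff j) := by
  ext i
  rw [Polynomial.hasseDeriv_coeff]
  rcases Nat.eq_zero_or_pos i with rfl | hi
  · simp
  · rw [Polynomial.coeff_C, if_neg hi.ne', p.coeff_eq_zero_of_natDegree_lt (by omega),
      mul_zero]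

open Polynomial in
lemma hasseDeriv_of_natDegree_le_succ (p : ℝ[X]) (n : ℕ) (hp : p.natDegree ≤ n + 1) :
    Polynomial.hasseDeriv n p
      = Polynomial.C (p.coeff n) + Polynomial.C ((n + 1 : ℝ) * p.coeff (n + 1)) * X := by
  ext i
  rw [Polynomial.hasseDeriv_coeff]
  match i with
  | 0 => simp
  | 1 => simp [Nat.choose_succ_self_right, add_comm 1 n]
  | (i+2) =>
    rw [p.coeff_eq_zero_of_natDegree_lt (by omega), mul_zero]
    simp [Polynomial.coeff_C, Polynomial.coeff_one]

open Polynomial in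
lemma fdiff_eval (h : ℝ) (p : ℝ[X]) :
    fdiff h (fun t => p.eval t) = fun t => ((Polynomial.taylor h p) - p).eval t := by
  funext t
  simp [fdiff, Polynomial.taylor_eval]

open Polynomial in
lemma key_iter (h : ℝ) : ∀ n (p : ℝ[X]), p.natDegree ≤ n →
    (fdiff h)^[n] (fun t => p.eval t) = fun t => (n.factorial : ℝ) * h ^ n * p.coeff n := by
  intro n
  induction n with
  | zero =>
    intro p hp
    rw [Polynomial.eq_C_of_natDegree_le_zero hp]
    simp
  | succ n ih =>
    intro p hp
    set q : ℝ[X] := Polynomial.taylor h p - p with hq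
    have hqdeg : q.natDegree ≤ n := by
      rw [Polynomial.natDegree_le_iff_coeff_eq_zero]
      intro N hN
      rw [hq, Polynomial.coeff_sub, Polynomial.taylor_coeff,
        hasseDeriv_of_natDegree_le p N (by omega)]
      simp
    have hqcoeff : q.coeff n = (n + 1 : ℝ) * h * p.coeff (n + 1) := by
      rw [hq, Polynomial.coeff_sub, Polynomial.taylor_coeff,
        hasseDeriv_of_natDegree_le_succ p n hp]
      simp
      ring
    rw [Function.iterate_succ_apply, fdiff_eval, ih q hqdeg]
    funext t
    rw [hqcoeff]
    rw [Nat.factorial_succ]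
    push_cast
    ring

lemma Icc_castSucc_eq (m : ℕ) (a b : Fin m) :
    Finset.Icc a.castSucc b.castSucc = (Finset.Icc a b).map Fin.castSuccEmb := by
  ext i
  simp only [Finset.mem_Icc, Finset.mem_map, Fin.castSuccEmb]
  constructor
  · rintro ⟨h1, h2⟩
    have hne : i ≠ Fin.last m :=
      Fin.ne_of_lt (lt_of_le_of_lt h2 (Fin.castSucc_lt_last b))
    obtain ⟨j, rfl⟩ := Fin.exists_castSucc_eq.mpr hne
    exact ⟨j, ⟨Fin.castSucc_le_castSucc_iff.mp h1, Fin.castSucc_le_castSucc_iff.mp h2⟩, rfl⟩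
  · rintro ⟨j, ⟨h1, h2⟩, rfl⟩
    exact ⟨Fin.castSucc_le_castSucc_iff.mpr h1, Fin.castSucc_le_castSucc_iff.mpr h2⟩

lemma hpoly_snoc (m : ℕ) (k : Fin m → ℝ) (s : ℝ) :
    hpoly (m + 1) (Fin.snoc k s)
      = hpoly m k * ∏ ℓ : Fin (m + 1),
          ∑ i ∈ Finset.Icc ℓ (Fin.last m), Fin.snoc k s i := by
  unfold hpoly
  rw [← Finset.prod_filter_mul_prod_filter_not
    (Finset.univ.filter (fun p : Fin (m+1) × Fin (m+1) => p.1 ≤ p.2))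
    (fun p => p.2 = Fin.last m)]
  rw [mul_comm]
  congr 1
  · -- pairs with second coordinate ≠ last ↔ pairs in Fin m
    rw [Finset.filter_filter]
    have hmem : ∀ p : Fin (m+1) × Fin (m+1),
        p ∈ Finset.univ.filter (fun p : Fin (m+1) × Fin (m+1) =>
          p.1 ≤ p.2 ∧ ¬ p.2 = Fin.last m) →
        p.1 ≠ Fin.last m ∧ p.2 ≠ Fin.last m := by
      intro p hp
      simp only [Finset.mem_filter, Finset.mem_univ, true_and] at hp
      exact ⟨fun h1 => hp.2 (le_antisymm (Fin.le_last _) (h1 ▸ hp.1)), hp.2⟩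
    refine Finset.prod_bij'
      (fun p hp => (p.1.castPred (hmem p hp).1, p.2.castPred (hmem p hp).2))
      (fun q _ => (q.1.castSucc, q.2.castSucc)) ?_ ?_ ?_ ?_ ?_
    · intro p hp
      have hp' := hp
      simp only [Finset.mem_filter, Finset.mem_univ, true_and] at hp' ⊢
      have : ((p.1.castPred (hmem p hp).1).castSucc : Fin (m+1))
          ≤ (p.2.castPred (hmem p hp).2).castSucc := by
        rw [Fin.castSucc_castPred, Fin.castSucc_castPred]; exact hp'.1
      exact Fin.castSucc_le_castSucc_iff.mp this
    · intro q hq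
      simp only [Finset.mem_filter, Finset.mem_univ, true_and] at hq ⊢
      exact ⟨Fin.castSucc_le_castSucc_iff.mpr hq, (Fin.castSucc_lt_last _).ne⟩
    · intro p hp
      simp [Fin.castSucc_castPred]
    · intro q hq
      simp [Fin.castPred_castSucc]
    · intro p hp
      obtain ⟨a, ha⟩ := Fin.exists_castSucc_eq.mpr (hmem p hp).1
      obtain ⟨c, hc⟩ := Fin.exists_castSucc_eq.mpr (hmem p hp).2
      dsimp only
      have h1 : p.1.castPred (hmem p hp).1 = a :=
        Fin.castSucc_injective _ (by rw [Fin.castSucc_castPred, ← ha])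
      have h2 : p.2.castPred (hmem p hp).2 = c :=
        Fin.castSucc_injective _ (by rw [Fin.castSucc_castPred, ← hc])
      rw [h1, h2, ← ha, ← hc, Icc_castSucc_eq, Finset.sum_map]
      apply Finset.sum_congr rfl
      intro j _
      rw [show Fin.castSuccEmb j = j.castSucc from congrFun Fin.coe_castSuccEmb j]
      simp
  · -- pairs with second coordinate = last
    rw [Finset.filter_filter]
    refine Finset.prod_bij' (fun p _ => p.1) (fun ℓ _ => (ℓ, Fin.last m)) ?_ ?_ ?_ ?_ ?_
    · intro p _; exact Finset.mem_univ _
    · intro ℓ _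
      simp [Fin.le_last]
    · intro p hp
      simp only [Finset.mem_filter, Finset.mem_univ, true_and] at hp
      exact Prod.ext rfl hp.2.symm
    · intro ℓ _; rfl
    · intro p hp
      simp only [Finset.mem_filter, Finset.mem_univ, true_and] at hp
      rw [hp.2]

/-- With `r = m + 1`: `Δ_h^r (a_r(k₁,…,k_{r-1},·)) = a_{r-1}(k₁,…,k_{r-1})·h^r`. -/
theorem stmt4 (m : ℕ) (k : Fin m → ℝ) (h t : ℝ) :
    (fdiff h)^[m + 1] (fun s => apoly (m + 1) (Fin.snoc k s)) t
      = apoly m k * h ^ (m + 1) := by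
  classical
  set b : Fin (m+1) → ℝ := fun ℓ => ∑ i ∈ Finset.Icc ℓ (Fin.last m), (Fin.snoc k (0:ℝ) : Fin (m+1) → ℝ) i with hb
  set P : Polynomial ℝ := Polynomial.C (hpoly m k / crconst (m+1))
      * ∏ ℓ : Fin (m+1), (Polynomial.X + Polynomial.C (b ℓ)) with hP
  set Q : Polynomial ℝ := ∏ ℓ : Fin (m+1), (Polynomial.X + Polynomial.C (b ℓ)) with hQ
  have hQmonic : Q.Monic :=
    Polynomial.monic_prod_of_monic _ _ (fun ℓ _ => Polynomial.monic_X_add_C _)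
  have hQdeg : Q.natDegree = m + 1 := by
    rw [hQ, Polynomial.natDegree_prod_of_monic _ _ (fun ℓ _ => Polynomial.monic_X_add_C _)]
    simp [Polynomial.natDegree_X_add_C]
  have hPdeg : P.natDegree ≤ m + 1 := by
    rw [hP]
    exact le_trans (Polynomial.natDegree_C_mul_le _ _) (le_of_eq hQdeg)
  have hPcoeff : P.coeff (m+1) = hpoly m k / crconst (m+1) := by
    rw [hP, Polynomial.coeff_C_mul, ← hQdeg, Polynomial.Monic.coeff_natDegree hQmonic, mul_one]
  have hfeq : (fun s => apoly (m + 1) (Fin.snoc k s)) = fun s => P.eval s := by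
    funext s
    have hsum : ∀ ℓ : Fin (m+1), (∑ i ∈ Finset.Icc ℓ (Fin.last m), Fin.snoc k s i) = s + b ℓ := by
      intro ℓ
      have hl : Fin.last m ∈ Finset.Icc ℓ (Fin.last m) := by
        simp [Finset.mem_Icc, Fin.le_last]
      simp only [hb]
      rw [← Finset.add_sum_erase _ _ hl, ← Finset.add_sum_erase _ _ hl]
      simp only [Fin.snoc_last, zero_add]
      congr 1
      apply Finset.sum_congr rfl
      intro i hi
      obtain ⟨j, rfl⟩ := Fin.exists_castSucc_eq.mpr (Finset.ne_of_mem_erase hi)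
      simp
    rw [apoly, hpoly_snoc, hP, hQ]
    simp only [Polynomial.eval_mul, Polynomial.eval_C, Polynomial.eval_prod,
      Polynomial.eval_add, Polynomial.eval_X]
    rw [Finset.prod_congr rfl (fun ℓ _ => hsum ℓ)]
    ring
  rw [hfeq, key_iter h (m+1) P hPdeg, hPcoeff]
  have hcr : (crconst (m+1) : ℝ) = (crconst m : ℝ) * ((m+1).factorial : ℝ) := by
    rw [crconst, crconst, Finset.prod_range_succ]
    push_cast
    ring
  have h1 : (crconst m : ℝ) ≠ 0 := by
    exact_mod_cast (Finset.prod_pos (fun i _ => Nat.factorial_pos (i+1))).ne'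
  have h2 : ((m+1).factorial : ℝ) ≠ 0 := by exact_mod_cast (Nat.factorial_pos _).ne'
  rw [apoly, hcr]
  field_simp
end

section
/- Let N ∈ ℕ, 0 < ε < 1/5, and ε/N ≤ θ ≤ 1/2 − ε/N. Define b_k := {(2k+1)θ} (fractional part). If ℓ consecutive terms b_{k₀+1},...,b_{k₀+ℓ} all lie in [0, ε/2] ∪ [1 − ε/2, 1), then ℓ ≤ N/2 + 1. -/
/-- Auxiliary: finish the bound from `(ℓ-1)*δ ≤ ε` with `δ ≥ 2ε/N`. -/
lemma stmt5_finish (N : ℕ) (ε δ : ℝ) (hε : 0 < ε) (hN : (0:ℝ) < N) (ℓ : ℕ)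
    (hℓ : (1:ℝ) ≤ ℓ) (hδ : 2 * (ε / N) ≤ δ) (h : ((ℓ:ℝ) - 1) * δ ≤ ε) :
    (ℓ : ℝ) ≤ N / 2 + 1 := by
  have h1 : ((ℓ:ℝ) - 1) * (2 * (ε / N)) ≤ ε := by
    calc ((ℓ:ℝ) - 1) * (2 * (ε / N)) ≤ ((ℓ:ℝ) - 1) * δ :=
          mul_le_mul_of_nonneg_left hδ (by linarith)
      _ ≤ ε := h
  have h2 : ((ℓ:ℝ) - 1) * (2 * ε) ≤ ε * N := by
    have := mul_le_mul_of_nonneg_right h1 hN.le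
    calc ((ℓ:ℝ) - 1) * (2 * ε) = ((ℓ:ℝ) - 1) * (2 * (ε / N)) * N := by
          field_simp
      _ ≤ ε * N := this
  nlinarith

/-- Lemma A.1 (1): a run of length `ℓ` of terms `b_k = {(2k+1)θ}` lying in
`[0, ε/2] ∪ [1-ε/2, 1)` satisfies `ℓ ≤ N/2 + 1`. -/
theorem stmt5 (N : ℕ) (hN : 1 ≤ N) (ε θ : ℝ) (hε : 0 < ε) (hε' : ε < 1 / 5)
    (hθ : ε / N ≤ θ) (hθ' : θ ≤ 1 / 2 - ε / N) (k₀ : ℤ) (ℓ : ℕ)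
    (hb : ∀ i : ℕ, 1 ≤ i → i ≤ ℓ →
      Int.fract (((2 * (k₀ + (i : ℤ)) + 1 : ℤ) : ℝ) * θ) ≤ ε / 2 ∨
      1 - ε / 2 ≤ Int.fract (((2 * (k₀ + (i : ℤ)) + 1 : ℤ) : ℝ) * θ)) :
    (ℓ : ℝ) ≤ N / 2 + 1 := by
  have hN1 : (1:ℝ) ≤ (N:ℝ) := by exact_mod_cast hN
  have hNpos : (0:ℝ) < N := by linarith
  rcases le_or_gt ℓ 1 with hl | hl
  · have hlr : (ℓ:ℝ) ≤ 1 := by exact_mod_cast hl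
    have h0 : (0:ℝ) ≤ (N:ℝ)/2 := by positivity
    linarith
  have hεN : 0 < ε / N := by positivity
  have hθpos : 0 < θ := lt_of_lt_of_le hεN hθ
  set x : ℕ → ℝ := fun i => ((2 * (k₀ + (i : ℤ)) + 1 : ℤ) : ℝ) * θ with hxdef
  have hstepx : ∀ i : ℕ, x (i+1) = x i + 2*θ := by
    intro i; simp only [hxdef]; push_cast; ring
  have hm0 : ∀ i : ℕ, ∃ mi : ℤ, 1 ≤ i → i ≤ ℓ → |x i - mi| ≤ ε/2 := by
    intro i
    rcases le_or_gt 1 i with h1 | h1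
    · rcases le_or_gt i ℓ with h2 | h2
      · rcases hb i h1 h2 with h | h
        · refine ⟨⌊x i⌋, fun _ _ => ?_⟩
          rw [Int.self_sub_floor, abs_of_nonneg (Int.fract_nonneg _)]
          exact h
        · refine ⟨⌊x i⌋ + 1, fun _ _ => ?_⟩
          have h' : 1 - ε / 2 ≤ Int.fract (x i) := h
          have hlt := Int.fract_lt_one (x i)
          have hsf := Int.self_sub_floor (x i)
          rw [abs_le]
          push_cast
          constructor <;> linarith
      · exact ⟨0, fun _ h => absurd h (by omega)⟩
    · exact ⟨0, fun h _ => absurd h (by omega)⟩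
  choose m hm using hm0
  have key : ∀ i, 1 ≤ i → i + 1 ≤ ℓ → |((m (i+1) - m i : ℤ) : ℝ) - 2*θ| ≤ ε := by
    intro i h1 h2
    have a := hm i h1 (by omega)
    have b := hm (i+1) (by omega) h2
    have hs := hstepx i
    rw [abs_le] at a b ⊢
    push_cast
    constructor <;> linarith
  have hℓ1 : (1:ℝ) ≤ (ℓ:ℝ) := by exact_mod_cast hl.le
  have e1 := hm 1 le_rfl (by omega)
  have e2 := hm ℓ (by omega) le_rfl
  rw [abs_le] at e1 e2
  have hxℓ : x ℓ - x 1 = ((ℓ:ℝ) - 1) * (2*θ) := by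
    simp only [hxdef]; push_cast; ring
  rcases le_or_gt (2*θ) ε with hA | hB
  · -- all steps zero
    have hz : ∀ i, 1 ≤ i → i + 1 ≤ ℓ → m (i+1) = m i := by
      intro i h1 h2
      have h := key i h1 h2
      rw [abs_le] at h
      have hlo : (-1:ℝ) < ((m (i+1) - m i : ℤ) : ℝ) := by linarith
      have hhi : ((m (i+1) - m i : ℤ) : ℝ) < 1 := by linarith
      have hlo' : (-1:ℤ) < m (i+1) - m i := by exact_mod_cast hlo
      have hhi' : m (i+1) - m i < 1 := by exact_mod_cast hhi
      omega
    have hconst : ∀ i, 1 ≤ i → i ≤ ℓ → m i = m 1 := by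
      intro i h1
      induction i, h1 using Nat.le_induction with
      | base => intro _; rfl
      | succ n hn ih => intro h; rw [hz n hn h]; exact ih (by omega)
    have hmeq : ((m ℓ : ℤ) : ℝ) = ((m 1 : ℤ) : ℝ) := by
      exact_mod_cast congrArg (fun z : ℤ => (z : ℝ)) (hconst ℓ (by omega) le_rfl)
    have hkey : ((ℓ:ℝ) - 1) * (2*θ) ≤ ε := by
      have := hxℓ; linarith
    exact stmt5_finish N ε (2*θ) hε hNpos ℓ hℓ1 (by linarith) hkey
  · -- all steps one
    have hz : ∀ i, 1 ≤ i → i + 1 ≤ ℓ → m (i+1) = m i + 1 := by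
      intro i h1 h2
      have h := key i h1 h2
      rw [abs_le] at h
      have hlo : (0:ℝ) < ((m (i+1) - m i : ℤ) : ℝ) := by linarith
      have hhi : ((m (i+1) - m i : ℤ) : ℝ) < 2 := by linarith
      have hlo' : (0:ℤ) < m (i+1) - m i := by exact_mod_cast hlo
      have hhi' : m (i+1) - m i < 2 := by exact_mod_cast hhi
      omega
    have hlin : ∀ i, 1 ≤ i → i ≤ ℓ → m i = m 1 + (i - 1 : ℤ) := by
      intro i h1
      induction i, h1 using Nat.le_induction with
      | base => intro _; simp
      | succ n hn ih =>
          intro h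
          rw [hz n hn h, ih (by omega)]
          push_cast
          ring
    have hmeq : ((m ℓ : ℤ) : ℝ) = ((m 1 : ℤ) : ℝ) + ((ℓ:ℝ) - 1) := by
      have := hlin ℓ (by omega) le_rfl
      rw [this]; push_cast; ring
    have hkey : ((ℓ:ℝ) - 1) * (1 - 2*θ) ≤ ε := by
      have h1 : ((ℓ:ℝ) - 1) * (1 - 2*θ) = (((m ℓ : ℤ):ℝ) - x ℓ) - (((m 1 : ℤ):ℝ) - x 1) := by
        rw [hmeq]; linarith [hxℓ]
      linarith [h1]
    have hδ : 2 * (ε / N) ≤ 1 - 2*θ := by linarith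
    exact stmt5_finish N ε (1 - 2*θ) hε hNpos ℓ hℓ1 hδ hkey
end

section
/- Let N ∈ ℕ, 0 < ε < 1/5, and ε/N ≤ θ ≤ 1/2 − ε/N, and set b_k := {(2k+1)θ}. Suppose b_{k₀+1},...,b_{k₀+ℓ} all lie in [0, ε/2] ∪ [1 − ε/2, 1) and b_{k₀+ℓ+1} ∈ (ε/2, 1 − ε/2). Then b_{k₀+ℓ+1}, b_{k₀+ℓ+2}, ..., b_{k₀+2ℓ} all lie in (ε/2, 1 − ε/2). -/
set_option maxHeartbeats 1000000


/-- Lemma A.1 (2): after a run of length `ℓ` of terms `b_k = {(2k+1)θ}` in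
`[0, ε/2] ∪ [1-ε/2, 1)`, if `b_{k₀+ℓ+1} ∈ (ε/2, 1-ε/2)` then the next `ℓ` terms
`b_{k₀+ℓ+1}, …, b_{k₀+2ℓ}` all lie in `(ε/2, 1-ε/2)`. -/
theorem stmt6 (N : ℕ) (hN : 1 ≤ N) (ε θ : ℝ) (hε : 0 < ε) (hε' : ε < 1 / 5)
    (hθ : ε / N ≤ θ) (hθ' : θ ≤ 1 / 2 - ε / N) (k₀ : ℤ) (ℓ : ℕ)
    (hb : ∀ i : ℕ, 1 ≤ i → i ≤ ℓ →
      Int.fract (((2 * (k₀ + (i : ℤ)) + 1 : ℤ) : ℝ) * θ) ≤ ε / 2 ∨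
      1 - ε / 2 ≤ Int.fract (((2 * (k₀ + (i : ℤ)) + 1 : ℤ) : ℝ) * θ))
    (hnext : ε / 2 < Int.fract (((2 * (k₀ + (ℓ : ℤ) + 1) + 1 : ℤ) : ℝ) * θ) ∧
      Int.fract (((2 * (k₀ + (ℓ : ℤ) + 1) + 1 : ℤ) : ℝ) * θ) < 1 - ε / 2) :
    ∀ i : ℕ, ℓ + 1 ≤ i → i ≤ 2 * ℓ →
      ε / 2 < Int.fract (((2 * (k₀ + (i : ℤ)) + 1 : ℤ) : ℝ) * θ) ∧
      Int.fract (((2 * (k₀ + (i : ℤ)) + 1 : ℤ) : ℝ) * θ) < 1 - ε / 2 := by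
  set b : ℕ → ℝ := fun n => Int.fract (((2 * (k₀ + (n : ℤ)) + 1 : ℤ) : ℝ) * θ) with hbdef
  have hb0 : ∀ n, 0 ≤ b n := fun n => Int.fract_nonneg _
  have hb1 : ∀ n, b n < 1 := fun n => Int.fract_lt_one _
  have hnext' : ε / 2 < b (ℓ+1) ∧ b (ℓ+1) < 1 - ε/2 := by
    have e : (2 * (k₀ + ((ℓ+1 : ℕ) : ℤ)) + 1 : ℤ) = (2 * (k₀ + (ℓ : ℤ) + 1) + 1 : ℤ) := by
      push_cast; ring
    simp only [hbdef, e]; exact hnext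
  intro i hi1 hi2
  show ε / 2 < b i ∧ b i < 1 - ε / 2
  clear_value b
  rcases Nat.lt_or_ge ℓ 2 with hℓ2 | hℓ2
  · interval_cases ℓ
    · omega
    · have : i = 2 := by omega
      subst this
      exact hnext'
  -- main case ℓ ≥ 2
  have key : ∀ x : ℝ, ∃ m : ℤ, Int.fract (x + 2*θ) = Int.fract x + 2*θ + m := by
    intro x
    refine ⟨⌊x⌋ - ⌊x + 2*θ⌋, ?_⟩
    rw [← Int.self_sub_floor, ← Int.self_sub_floor]
    push_cast; ring
  have hstep : ∀ n : ℕ, ∃ m : ℤ, b (n+1) = b n + 2*θ + m := by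
    intro n
    have harg : ((2 * (k₀ + ((n+1 : ℕ) : ℤ)) + 1 : ℤ) : ℝ) * θ
        = ((2 * (k₀ + (n : ℤ)) + 1 : ℤ) : ℝ) * θ + 2*θ := by push_cast; ring
    obtain ⟨m, hm⟩ := key (((2 * (k₀ + (n : ℤ)) + 1 : ℤ) : ℝ) * θ)
    refine ⟨m, ?_⟩
    simp only [hbdef]
    rw [harg, hm]
  have hcong : ∀ n : ℕ, ∃ m : ℤ, b (n+1) = b 1 + n * (2*θ) + m := by
    intro n
    induction n with
    | zero => exact ⟨0, by simp⟩
    | succ k ih =>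
      obtain ⟨m, hm⟩ := ih
      obtain ⟨m', hm'⟩ := hstep (k+1)
      exact ⟨m + m', by rw [hm', hm]; push_cast; ring⟩
  -- signed representatives
  have hrep : ∀ n : ℕ, 1 ≤ n → n ≤ ℓ → ∃ (a : ℝ) (m : ℤ), b n = a + m ∧ |a| ≤ ε/2 := by
    intro n h1 h2
    have h : b n ≤ ε / 2 ∨ 1 - ε / 2 ≤ b n := by
      simp only [hbdef]; exact hb n h1 h2
    rcases h with h | h
    · exact ⟨b n, 0, by simp, by rw [abs_of_nonneg (hb0 n)]; exact h⟩
    · refine ⟨b n - 1, 1, by push_cast; ring, ?_⟩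
      rw [abs_of_nonpos (by linarith [hb1 n])]; linarith
  obtain ⟨a1, m1, e1, ha1⟩ := hrep 1 le_rfl (by omega)
  obtain ⟨a2, m2, e2, ha2⟩ := hrep 2 (by omega) (by omega)
  obtain ⟨ms, hms⟩ := hstep 1
  set γ : ℝ := a2 - a1 with hγdef
  have ha1' := abs_le.mp ha1
  have ha2' := abs_le.mp ha2
  have hγε : |γ| ≤ ε := by
    rw [abs_le]
    constructor <;> [nlinarith; nlinarith]
  have hγε' := abs_le.mp hγε
  clear_value γ
  have hM : 2*θ = γ + ((m2 - m1 - ms : ℤ) : ℝ) := by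
    rw [e1, e2] at hms
    push_cast
    linarith
  -- congruence in terms of γ
  have hcongγ : ∀ n : ℕ, ∃ m : ℤ, b (n+1) = a1 + n * γ + m := by
    intro n
    obtain ⟨m, hm⟩ := hcong n
    refine ⟨m1 + n*(m2 - m1 - ms) + m, ?_⟩
    rw [hm, e1, hM]
    push_cast
    ring
  -- bound during the run
  have hbnd : ∀ n : ℕ, n + 1 ≤ ℓ → |a1 + n * γ| ≤ ε/2 := by
    intro n
    induction n with
    | zero => intro _; simpa using ha1
    | succ k ih =>
      intro hk
      have ihk := abs_le.mp (ih (by omega))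
      obtain ⟨m, hm⟩ := hcongγ (k+1)
      have ht : |a1 + ((k:ℝ)+1) * γ| ≤ 3*ε/2 := by
        rw [abs_le]; constructor <;> nlinarith
      have ht' := abs_le.mp ht
      have hbn := hb (k+1+1) (by omega) (by omega)
      have hbn0 := hb0 (k+1+1)
      have hbn1 := hb1 (k+1+1)
      simp only [hbdef] at hbn hbn0 hbn1 hm
      push_cast at hbn hbn0 hbn1 hm
      have hmcase : m = 0 ∨ m = 1 := by
        have l1 : (-1 : ℝ) < m := by nlinarith
        have l2 : (m : ℝ) < 2 := by nlinarith
        have l1' : (-1 : ℤ) < m := by exact_mod_cast l1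
        have l2' : m < 2 := by exact_mod_cast l2
        omega
      push_cast
      rcases hmcase with rfl | rfl <;> rcases hbn with h | h <;>
        [skip; exfalso; exfalso; skip] <;>
        (try (rw [abs_le]; constructor)) <;> push_cast at hm <;> nlinarith
  -- |(ℓ-1)γ| ≤ ε/2 + ε/2
  have haℓcast : ((ℓ - 1 : ℕ) : ℝ) = (ℓ:ℝ) - 1 := by
    have h1 : (1:ℕ) ≤ ℓ := by omega
    push_cast [h1]
    ring
  have haℓ : |a1 + ((ℓ:ℝ) - 1) * γ| ≤ ε/2 := by
    have := hbnd (ℓ - 1) (by omega)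
    rwa [haℓcast] at this
  have haℓ' := abs_le.mp haℓ
  -- the value at ℓ+1
  obtain ⟨n₀, hn₀⟩ := hcongγ ℓ
  obtain ⟨hc1, hc2⟩ := hnext'
  -- target index
  obtain ⟨m, hm⟩ := hcongγ (i - 1)
  have hi' : i - 1 + 1 = i := by omega
  rw [hi'] at hm
  have hicast : ((i - 1 : ℕ) : ℝ) = (i:ℝ) - 1 := by
    have h1 : (1:ℕ) ≤ i := by omega
    push_cast [h1]
    ring
  rw [hicast] at hm
  have hiR1 : (ℓ:ℝ) + 1 ≤ (i:ℝ) := by exact_mod_cast hi1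
  have hiR2 : (i:ℝ) ≤ 2 * ℓ := by exact_mod_cast hi2
  have hℓR : (2:ℝ) ≤ ℓ := by exact_mod_cast hℓ2
  have hbi0 := hb0 i
  have hbi1 := hb1 i
  -- set J := (i:ℝ) - 1 - ℓ, with 0 ≤ J ≤ ℓ - 1
  have hJ1 : (0:ℝ) ≤ (i:ℝ) - 1 - ℓ := by linarith
  have hJ2 : (i:ℝ) - 1 - ℓ ≤ (ℓ:ℝ) - 1 := by linarith
  have hvJ : a1 + ((i:ℝ) - 1) * γ = (a1 + (ℓ:ℝ) * γ) + ((i:ℝ) - 1 - ℓ) * γ := by ring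
  have hu : a1 + (ℓ:ℝ) * γ = (a1 + ((ℓ:ℝ) - 1) * γ) + γ := by ring
  have haL1 := haℓ'.1
  have haL2 := haℓ'.2
  have hA1 := ha1'.1
  have hA2 := ha1'.2
  have hg1 := hγε'.1
  have hg2 := hγε'.2
  rcases le_or_gt 0 γ with hγ0 | hγ0
  · -- γ ≥ 0 : the integer at ℓ+1 is 0
    have hJγ1 : 0 ≤ ((i:ℝ) - 1 - ℓ) * γ := mul_nonneg hJ1 hγ0
    have hJγ2 : ((i:ℝ) - 1 - ℓ) * γ ≤ ((ℓ:ℝ) - 1) * γ := mul_le_mul_of_nonneg_right hJ2 hγ0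
    have hℓγ : ((ℓ:ℝ) - 1) * γ ≤ ε := by linarith
    have hn₀0 : n₀ = 0 := by
      have l1 : (-1 : ℝ) < n₀ := by linarith
      have l2 : (n₀ : ℝ) < 1 := by linarith
      have l1' : (-1 : ℤ) < n₀ := by exact_mod_cast l1
      have l2' : n₀ < 1 := by exact_mod_cast l2
      omega
    rw [hn₀0] at hn₀
    push_cast at hn₀
    have hm0 : m = 0 := by
      have l1 : (-1 : ℝ) < m := by linarith
      have l2 : (m : ℝ) < 1 := by linarith
      have l1' : (-1 : ℤ) < m := by exact_mod_cast l1
      have l2' : m < 1 := by exact_mod_cast l2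
      omega
    rw [hm0] at hm
    push_cast at hm
    constructor <;> linarith
  · -- γ < 0 : the integer at ℓ+1 is 1
    have hJγ1 : ((i:ℝ) - 1 - ℓ) * γ ≤ 0 := mul_nonpos_of_nonneg_of_nonpos hJ1 hγ0.le
    have hJγ2 : ((ℓ:ℝ) - 1) * γ ≤ ((i:ℝ) - 1 - ℓ) * γ := mul_le_mul_of_nonpos_right hJ2 hγ0.le
    have hℓγ : -ε ≤ ((ℓ:ℝ) - 1) * γ := by linarith
    have hn₀1 : n₀ = 1 := by
      have l1 : (0 : ℝ) < n₀ := by linarith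
      have l2 : (n₀ : ℝ) < 2 := by linarith
      have l1' : (0 : ℤ) < n₀ := by exact_mod_cast l1
      have l2' : n₀ < 2 := by exact_mod_cast l2
      omega
    rw [hn₀1] at hn₀
    push_cast at hn₀
    have hm1 : m = 1 := by
      have l1 : (0 : ℝ) < m := by linarith
      have l2 : (m : ℝ) < 2 := by linarith
      have l1' : (0 : ℤ) < m := by exact_mod_cast l1
      have l2' : m < 2 := by exact_mod_cast l2
      omega
    rw [hm1] at hm
    push_cast at hm
    constructor <;> linarith
end

section
/- Let N ∈ ℕ with N ≥ 4, 0 < ε ≤ 1/32, and k₀ ∈ ℤ with 3N ≤ k₀ ≤ 5N. Then for any real θ with ε/N ≤ θ ≤ 1/2, the number of integers k with k₀ ≤ k < k₀ + N and ε/2 < {(2k+1)θ} < 1 − ε/2 is at least N/8. -/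
/-!
Write `‖x‖` for the distance from `x` to the nearest integer, the norm of `x` in `ℝ/ℤ`; the
condition on the fractional part says `ε/2 < ‖(2k+1)θ‖`. If `θ` is so close to `1/2` that
`(2k+1)(1 - 2θ) < 1 - ε` on the whole window, then `‖(2k+1)θ‖ = (1 - (2k+1)(1 - 2θ))/2` and every
`k` qualifies. Otherwise `‖2θ‖ ≥ 2ε/N`, so some shift `1 ≤ m ≤ 3N/4` has `‖2mθ‖ > ε`. As
`(2(k+m)+1)θ - (2k+1)θ = 2mθ`, the triangle inequality makes `k` or `k + m` qualify, and pairing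
each failing `k` with `k + m` leaves at least `(N - m)/2 ≥ N/8` qualifying `k`.
-/

open Finset

namespace UnitAddCircle

theorem norm_coe_add_intCast (x : ℝ) (n : ℤ) :
    ‖((x + n : ℝ) : UnitAddCircle)‖ = ‖(x : UnitAddCircle)‖ := by
  simp only [norm_eq, round_add_intCast, Int.cast_add]
  ring_nf

theorem norm_coe_of_abs_le_half {x : ℝ} (hx : |x| ≤ 1 / 2) : ‖(x : UnitAddCircle)‖ = |x| :=
  (AddCircle.norm_coe_eq_abs_iff 1 one_ne_zero).2 (by simpa using hx)

theorem lt_norm_coe_iff (δ x : ℝ) :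
    δ < ‖(x : UnitAddCircle)‖ ↔ δ < Int.fract x ∧ Int.fract x < 1 - δ := by
  rw [norm_eq, abs_sub_round_eq_min, lt_min_iff, lt_sub_comm]

theorem exists_norm_natCast_mul_gt {a ε : ℝ} (ha : 0 < ‖(a : UnitAddCircle)‖)
    (haε : ‖(a : UnitAddCircle)‖ ≤ ε) (hε : ε ≤ 1 / 4) :
    ∃ m : ℕ, (m : ℝ) ≤ ε / ‖(a : UnitAddCircle)‖ + 1 ∧
      ε < ‖((m * a : ℝ) : UnitAddCircle)‖ := by
  set d := ‖(a : UnitAddCircle)‖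
  have hεd : 0 ≤ ε / d := div_nonneg (ha.le.trans haε) ha.le
  -- the first multiple of `d` beyond `ε`; it overshoots by at most `d`, so stays below `1/2`
  set m := ⌊ε / d⌋₊ + 1 with hm
  have hmd : (m : ℝ) ≤ ε / d + 1 := by
    rw [hm]; push_cast; linarith [Nat.floor_le hεd]
  have hgt : ε < m * d := by
    rw [← div_lt_iff₀ ha, hm]; push_cast; exact Nat.lt_floor_add_one _
  have hle : m * d ≤ ε + d := by
    nlinarith [div_mul_cancel₀ ε ha.ne']
  have hshift : (m : ℝ) * a = m * (a - round a) + ((m * round a : ℤ) : ℝ) := by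
    push_cast; ring
  have hd : d = |a - round a| := norm_eq
  refine ⟨m, hmd, ?_⟩
  rw [hshift, norm_coe_add_intCast, norm_coe_of_abs_le_half] <;>
    rw [abs_mul, Nat.abs_cast, ← hd] <;> linarith

end UnitAddCircle

theorem lt_norm_or_lt_norm_of_lt_norm_sub {E : Type*} [SeminormedAddGroup E] {x y : E}
    {ε : ℝ} (h : ε < ‖y - x‖) : ε / 2 < ‖x‖ ∨ ε / 2 < ‖y‖ := by
  by_contra! hle
  linarith [norm_sub_le y x]

theorem card_le_two_mul_card_filter_add {P : ℤ → Prop} [DecidablePred P] {m : ℕ}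
    (h : ∀ k, P k ∨ P (k + m)) (a : ℤ) (n : ℕ) :
    n ≤ 2 * #{k ∈ Ico a (a + n) | P k} + m := by
  have hbad : {k ∈ Ico a (a + n) | ¬P k}
      ⊆ {k ∈ Ico a (a + n) | P k}.image (· - (m : ℤ)) ∪ Ico (a + n - m) (a + n) := by
    intro k hk
    simp only [mem_filter, mem_Ico] at hk
    simp only [mem_union, mem_image, mem_filter, mem_Ico]
    by_cases hkm : k < a + n - m
    · exact Or.inl ⟨k + m, ⟨⟨by omega, by omega⟩, (h k).resolve_left hk.2⟩, by ring⟩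
    · exact Or.inr ⟨by omega, hk.1.2⟩
  have hcard := (card_le_card hbad).trans (card_union_le _ _)
  have htotal := card_filter_add_card_filter_not (s := Ico a (a + n)) (fun k => P k)
  simp only [Int.card_Ico, add_sub_cancel_left, Int.toNat_natCast, sub_sub_cancel] at hcard htotal
  have := card_image_le (s := {k ∈ Ico a (a + n) | P k}) (f := (· - (m : ℤ)))
  omega

section

open UnitAddCircle

theorem lt_norm_odd_mul_of_near_half {δ θ : ℝ} {k : ℤ} (hδ : 0 ≤ δ) (hk : 0 ≤ k)
    (hθ : θ ≤ 1 / 2) (h : ((2 * k + 1 : ℤ) : ℝ) * (1 - 2 * θ) < 1 - δ) :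
    δ / 2 < ‖((((2 * k + 1 : ℤ) : ℝ) * θ : ℝ) : UnitAddCircle)‖ := by
  set t := ((2 * k + 1 : ℤ) : ℝ) * (1 - 2 * θ)
  have ht : 0 ≤ t := mul_nonneg (by exact_mod_cast (by omega : 0 ≤ 2 * k + 1)) (by linarith)
  have hsplit : ((2 * k + 1 : ℤ) : ℝ) * θ = (1 - t) / 2 + (k : ℝ) := by
    simp only [t]; push_cast; ring
  rw [hsplit, norm_coe_add_intCast, norm_coe_of_abs_le_half] <;>
    rw [abs_of_nonneg (by linarith)] <;> linarith

theorem exists_shift_lt_norm {N : ℕ} (hN : 4 ≤ N) {ε θ : ℝ} (hε : 0 < ε) (hε' : ε ≤ 1 / 32)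
    (hθ : ε / N ≤ θ) (hfar : 1 - ε ≤ 12 * N * (1 - 2 * θ)) :
    ∃ m : ℕ, 4 * m ≤ 3 * N ∧ ε < ‖((m * (2 * θ) : ℝ) : UnitAddCircle)‖ := by
  have hN0 : (0 : ℝ) < N := by positivity
  have hθ0 : 0 < θ := (div_pos hε hN0).trans_le hθ
  have hθ1 : 2 * θ < 1 := by
    by_contra! h
    nlinarith
  have hd : 2 * ε / N ≤ ‖((2 * θ : ℝ) : UnitAddCircle)‖ := by
    rw [norm_eq, abs_sub_round_eq_min, Int.fract_eq_self.2 ⟨by linarith, hθ1⟩, le_min_iff,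
      mul_div_assoc]
    refine ⟨by linarith, ?_⟩
    rw [← mul_div_assoc, div_le_iff₀ hN0]
    nlinarith
  by_cases hshort : ε < ‖((2 * θ : ℝ) : UnitAddCircle)‖
  · exact ⟨1, by omega, by simpa using hshort⟩
  rw [not_lt] at hshort
  have hd0 : 0 < ‖((2 * θ : ℝ) : UnitAddCircle)‖ := (by positivity : 0 < 2 * ε / N).trans_le hd
  obtain ⟨m, hmle, hm⟩ := exists_norm_natCast_mul_gt hd0 hshort (by linarith)
  refine ⟨m, ?_, hm⟩
  have hdiv : ε / ‖((2 * θ : ℝ) : UnitAddCircle)‖ ≤ N / 2 := by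
    rw [div_le_iff₀ hd0]
    linarith [(div_le_iff₀ hN0).1 hd]
  have hN4 : (4 : ℝ) ≤ N := by exact_mod_cast hN
  exact_mod_cast (by linarith : (4 * m : ℝ) ≤ 3 * N)

end

/-- Lemma A.2: in any window `k₀ ≤ k < k₀ + N` with `3N ≤ k₀ ≤ 5N`, at least `N/8`
of the fractional parts `{(2k+1)θ}` lie in `(ε/2, 1 - ε/2)`. -/
theorem stmt7 (N : ℕ) (hN : 4 ≤ N) (ε : ℝ) (hε : 0 < ε) (hε' : ε ≤ 1 / 32)
    (k₀ : ℤ) (hk₀ : 3 * (N : ℤ) ≤ k₀) (hk₀' : k₀ ≤ 5 * (N : ℤ)) (θ : ℝ)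
    (hθ : ε / N ≤ θ) (hθ' : θ ≤ 1 / 2) :
    (N : ℝ) / 8 ≤
      ({k : ℤ | k₀ ≤ k ∧ k < k₀ + N ∧
        ε / 2 < Int.fract (((2 * k + 1 : ℤ) : ℝ) * θ) ∧
        Int.fract (((2 * k + 1 : ℤ) : ℝ) * θ) < 1 - ε / 2}.ncard : ℝ) := by
  classical
  set P : ℤ → Prop := fun k => ε / 2 < ‖((((2 * k + 1 : ℤ) : ℝ) * θ : ℝ) : UnitAddCircle)‖
  have hset : {k : ℤ | k₀ ≤ k ∧ k < k₀ + N ∧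
      ε / 2 < Int.fract (((2 * k + 1 : ℤ) : ℝ) * θ) ∧
      Int.fract (((2 * k + 1 : ℤ) : ℝ) * θ) < 1 - ε / 2} = {k ∈ Ico k₀ (k₀ + N) | P k} := by
    ext k
    simp [P, UnitAddCircle.lt_norm_coe_iff, and_assoc]
  rw [hset, Set.ncard_coe_finset]
  by_cases hnear : 12 * N * (1 - 2 * θ) < 1 - ε
  · have hall : ∀ k ∈ Ico k₀ (k₀ + N), P k := by
      intro k hk
      rw [mem_Ico] at hk
      have hk12 : ((2 * k + 1 : ℤ) : ℝ) ≤ 12 * N := by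
        exact_mod_cast (by omega : 2 * k + 1 ≤ 12 * N)
      refine lt_norm_odd_mul_of_near_half hε.le (by omega) hθ' ?_
      nlinarith
    rw [filter_true_of_mem hall, Int.card_Ico, add_sub_cancel_left, Int.toNat_natCast]
    linarith [(by positivity : (0 : ℝ) ≤ N)]
  obtain ⟨m, hmN, hm⟩ := exists_shift_lt_norm hN hε hε' hθ (not_lt.1 hnear)
  have hpair : ∀ k, P k ∨ P (k + m) := by
    intro k
    have hdiff : ((((2 * (k + m) + 1 : ℤ) : ℝ) * θ : ℝ) : UnitAddCircle)
          - ((((2 * k + 1 : ℤ) : ℝ) * θ : ℝ) : UnitAddCircle)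
        = ((m * (2 * θ) : ℝ) : UnitAddCircle) := by
      rw [← AddCircle.coe_sub]; push_cast; ring_nf
    exact lt_norm_or_lt_norm_of_lt_norm_sub (hdiff ▸ hm)
  have hcount := card_le_two_mul_card_filter_add hpair k₀ N
  have : (N : ℝ) ≤ 2 * #{k ∈ Ico k₀ (k₀ + N) | P k} + m := by exact_mod_cast hcount
  have : (4 * m : ℝ) ≤ 3 * N := by exact_mod_cast hmN
  linarith
end

section
/- Let 0 < ε ≤ 1/32, N ∈ ℕ with N ≥ 4, and θ ∈ ℝ with ε/N² ≤ θ ≤ 1/2. Then the number of pairs of integers (k, j) with N ≤ k ≤ 3N, 2N ≤ j ≤ 3N, and ε/4 < {θ · k(2j+k)} < 1 − ε/4 is at least N²/16. -/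
/-!
Call `x` δ-near if it lies within δ of an integer, and write m(k, j) = k(2j + k). Since
m(k, j + 1) - m(k, j) = 2k, two consecutive j can both make θ·m ε/4-near only if 2θk is ε/2-near;
hence every k with 2θk not ε/2-near has at least N/2 good j. If 2θ is not ε-near, the same
argument in k shows that half of the k ∈ [N, 3N] qualify.

Otherwise θ or 1/2 - θ is a number ψ ∈ [0, ε/2], and for odd k (so odd m) the question becomes
whether ψ·m - c is ε/4-near, with c = 0 or c = 1/2. For ψ ≤ 1/(60N²) every such pair is good,
since ψ·m ≤ 9/20 (and ψ·m ≥ 5ε when c = 0, because θ ≥ ε/N²). For larger ψ we count clusters: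
if f(x) + σ ≤ f(y) whenever x < y, each integer is δ-close to at most 2δ/σ + 1 values of f, and
at most (length of the range of f) + 2δ + 1 integers are within reach. For ψ ≤ 1/(48N) this is
applied to k ↦ ψ·m(k, j) at fixed j (it grows by at least 12Nψ between odd k), and beyond that to
k ↦ 2ψk, leaving N/8 odd k with 2ψk not ε/2-near.
-/

open Finset

def NearInt (δ x : ℝ) : Prop := ∃ n : ℤ, |x - n| ≤ δ

noncomputable instance (δ : ℝ) : DecidablePred (NearInt δ) := Classical.decPred _

namespace NearInt

variable {δ δ' x y : ℝ}

theorem sub (hx : NearInt δ x) (hy : NearInt δ' y) : NearInt (δ + δ') (x - y) := by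
  obtain ⟨n, hn⟩ := hx
  obtain ⟨n', hn'⟩ := hy
  refine ⟨n - n', ?_⟩
  calc |x - y - ((n - n' : ℤ) : ℝ)| = |(x - n) - (y - n')| := by push_cast; ring_nf
    _ ≤ |x - n| + |y - n'| := abs_sub _ _
    _ ≤ δ + δ' := add_le_add hn hn'

theorem int_sub_iff (n : ℤ) : NearInt δ (n - x) ↔ NearInt δ x := by
  constructor <;> rintro ⟨k, hk⟩ <;> refine ⟨n - k, ?_⟩ <;> rw [← abs_neg] <;>
    convert hk using 2 <;> push_cast <;> ring

theorem not_of_mem_Ioo (n : ℤ) (h₁ : n + δ < x) (h₂ : x < n + 1 - δ) : ¬NearInt δ x := by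
  rintro ⟨k, hk⟩
  obtain ⟨hk₁, hk₂⟩ := abs_le.1 hk
  rcases le_or_gt k n with h | h
  · have : (k : ℝ) ≤ n := by exact_mod_cast h
    linarith
  · have : (n : ℝ) + 1 ≤ k := by exact_mod_cast h
    linarith

theorem fract_mem_Ioo_of_not (h : ¬NearInt δ x) : Int.fract x ∈ Set.Ioo δ (1 - δ) := by
  have h₀ : δ < |x - ⌊x⌋| := not_le.1 fun h' => h ⟨_, h'⟩
  have h₁ : δ < |x - (⌊x⌋ + 1 : ℤ)| := not_le.1 fun h' => h ⟨_, h'⟩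
  have := Int.floor_le x
  have := Int.lt_floor_add_one x
  push_cast at h₁
  rw [abs_of_nonneg (by linarith)] at h₀
  rw [abs_of_neg (by linarith)] at h₁
  exact ⟨by rw [Int.fract]; linarith, by rw [Int.fract]; linarith⟩

theorem half_sub_mul_sub_half_iff {θ : ℝ} {m : ℤ} (hm : Odd m) :
    NearInt δ ((1 / 2 - θ) * m - 1 / 2) ↔ NearInt δ (θ * m) := by
  obtain ⟨t, rfl⟩ := hm
  rw [show (1 / 2 - θ) * ((2 * t + 1 : ℤ) : ℝ) - 1 / 2 = t - θ * ((2 * t + 1 : ℤ) : ℝ) by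
    push_cast; ring, NearInt.int_sub_iff]

end NearInt

theorem mul_card_le_of_separated {α : Type*} [LinearOrder α] (A : Finset α) (g : α → ℝ)
    {s lo hi : ℝ} (hsep : ∀ x ∈ A, ∀ y ∈ A, x < y → g x + s ≤ g y)
    (hA : ∀ x ∈ A, lo ≤ g x ∧ g x ≤ hi) (h : lo ≤ hi + s) : s * #A ≤ hi - lo + s := by
  induction A using Finset.induction_on_max generalizing hi with
  | empty => simp only [card_empty, Nat.cast_zero, mul_zero]; linarith
  | insert a B hlt ih =>
    have hmem : ∀ x ∈ B, x ∈ insert a B := fun x => mem_insert_of_mem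
    have ha := hA a (mem_insert_self a B)
    have hB : s * #B ≤ (g a - s) - lo + s :=
      ih (fun x hx y hy => hsep x (hmem x hx) y (hmem y hy))
        (fun x hx => ⟨(hA x (hmem x hx)).1, by
          linarith [hsep x (hmem x hx) a (mem_insert_self a B) (hlt x hx)]⟩)
        (by linarith)
    rw [card_insert_of_notMem fun h => lt_irrefl a (hlt a h)]
    push_cast
    linarith

theorem Int.cast_card_Icc {a b : ℤ} (h : a ≤ b + 1) : (#(Icc a b) : ℝ) = b + 1 - a := by
  exact_mod_cast congrArg (Int.cast : ℤ → ℝ) (Int.card_Icc_of_le a b h)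

theorem card_Icc_ceil_floor_le {u v : ℝ} (h : u ≤ v) : (#(Icc ⌈u⌉ ⌊v⌋) : ℝ) ≤ v - u + 1 := by
  have := Int.le_ceil u
  have := Int.floor_le v
  have hle : ⌈u⌉ ≤ ⌊v⌋ + 1 := by
    have := Int.ceil_lt_add_one u
    have := Int.lt_floor_add_one v
    have : (⌈u⌉ : ℝ) < ⌊v⌋ + 2 := by linarith
    have : ⌈u⌉ < ⌊v⌋ + 2 := by exact_mod_cast this
    omega
  rw [Int.cast_card_Icc hle]
  linarith

theorem sub_div_two_le_card_filter_Icc {a b : ℤ} (hab : a ≤ b) (P : ℤ → Prop) [DecidablePred P]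
    (h : ∀ t, a ≤ t → t + 1 ≤ b → P t ∨ P (t + 1)) :
    ((b : ℝ) - a) / 2 ≤ #{t ∈ Icc a b | P t} := by
  have hsep : ∀ x ∈ {t ∈ Icc a b | ¬P t}, ∀ y ∈ {t ∈ Icc a b | ¬P t}, x < y →
      (x : ℝ) + 2 ≤ y := by
    intro x hx y hy hxy
    simp only [mem_filter, mem_Icc] at hx hy
    have : x + 2 ≤ y := by
      by_contra hc
      obtain rfl : y = x + 1 := by omega
      exact (h x hx.1.1 hy.1.2).elim hx.2 hy.2
    exact_mod_cast this
  have hbad := mul_card_le_of_separated _ _ hsep (lo := a) (hi := b) (fun x hx => by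
    simp only [mem_filter, mem_Icc] at hx
    exact ⟨by exact_mod_cast hx.1.1, by exact_mod_cast hx.1.2⟩)
    (by have : (a : ℝ) ≤ b := by exact_mod_cast hab
        linarith)
  have htot : (#{t ∈ Icc a b | P t} : ℝ) + #{t ∈ Icc a b | ¬P t} = b + 1 - a := by
    rw [← Int.cast_card_Icc (by omega)]
    exact_mod_cast card_filter_add_card_filter_not P
  linarith

theorem sub_div_two_le_card_filter_not_nearInt {a b : ℤ} (hab : a ≤ b) (g : ℤ → ℝ) {α δ : ℝ}
    (hg : ∀ t, g (t + 1) - g t = α) (hα : ¬NearInt (2 * δ) α) :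
    ((b : ℝ) - a) / 2 ≤ #{t ∈ Icc a b | ¬NearInt δ (g t)} :=
  sub_div_two_le_card_filter_Icc hab _ fun t _ _ => by
    by_contra! h
    have := h.2.sub h.1
    rw [hg, ← two_mul] at this
    exact hα this

theorem card_filter_nearInt_le {α : Type*} [LinearOrder α] (A : Finset α) (f : α → ℝ)
    {σ δ a b : ℝ} (hσ : 0 < σ) (hδ : 0 ≤ δ) (hab : a ≤ b)
    (hsep : ∀ x ∈ A, ∀ y ∈ A, x < y → f x + σ ≤ f y) (hf : ∀ x ∈ A, a ≤ f x ∧ f x ≤ b) :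
    (#{x ∈ A | NearInt δ (f x)} : ℝ) ≤ (b - a + 2 * δ + 1) * (2 * δ / σ + 1) := by
  classical
  set T : ℤ → Finset α := fun n => {x ∈ A | |f x - n| ≤ δ}
  have hcover : {x ∈ A | NearInt δ (f x)} ⊆ (Icc ⌈a - δ⌉ ⌊b + δ⌋).biUnion T := by
    intro x hx
    obtain ⟨hxA, n, hn⟩ := mem_filter.1 hx
    obtain ⟨hn₁, hn₂⟩ := abs_le.1 hn
    have := hf x hxA
    refine mem_biUnion.2 ⟨n, mem_Icc.2 ⟨Int.ceil_le.2 (by linarith), Int.le_floor.2 (by linarith)⟩,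
      mem_filter.2 ⟨hxA, hn⟩⟩
  have hT : ∀ n, (#(T n) : ℝ) ≤ 2 * δ / σ + 1 := by
    intro n
    have := mul_card_le_of_separated (T n) f (lo := n - δ) (hi := n + δ)
      (fun x hx y hy => hsep x (mem_filter.1 hx).1 y (mem_filter.1 hy).1)
      (fun x hx => by obtain ⟨h₁, h₂⟩ := abs_le.1 (mem_filter.1 hx).2; constructor <;> linarith)
      (by linarith)
    rw [div_add_one hσ.ne', le_div_iff₀ hσ]
    linarith
  calc (#{x ∈ A | NearInt δ (f x)} : ℝ) ≤ #((Icc ⌈a - δ⌉ ⌊b + δ⌋).biUnion T) := by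
        exact_mod_cast card_le_card hcover
    _ ≤ ∑ n ∈ Icc ⌈a - δ⌉ ⌊b + δ⌋, (#(T n) : ℝ) := by exact_mod_cast card_biUnion_le
    _ ≤ ∑ n ∈ Icc ⌈a - δ⌉ ⌊b + δ⌋, (2 * δ / σ + 1) := sum_le_sum fun n _ => hT n
    _ = #(Icc ⌈a - δ⌉ ⌊b + δ⌋) * (2 * δ / σ + 1) := by rw [sum_const, nsmul_eq_mul]
    _ ≤ (b - a + 2 * δ + 1) * (2 * δ / σ + 1) := by
        gcongr
        linarith [card_Icc_ceil_floor_le (show a - δ ≤ b + δ by linarith)]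

theorem card_sub_le_card_filter_not_nearInt {α : Type*} [LinearOrder α] (A : Finset α)
    (f : α → ℝ) {σ δ a b : ℝ} (hσ : 0 < σ) (hδ : 0 ≤ δ) (hab : a ≤ b)
    (hsep : ∀ x ∈ A, ∀ y ∈ A, x < y → f x + σ ≤ f y) (hf : ∀ x ∈ A, a ≤ f x ∧ f x ≤ b) :
    #A - (b - a + 2 * δ + 1) * (2 * δ / σ + 1) ≤ #{x ∈ A | ¬NearInt δ (f x)} := by
  have := card_filter_nearInt_le A f hσ hδ hab hsep hf
  have htot : (#{x ∈ A | NearInt δ (f x)} : ℝ) + #{x ∈ A | ¬NearInt δ (f x)} = #A := by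
    exact_mod_cast card_filter_add_card_filter_not _
  linarith

theorem card_filter_product_eq_sum {α β : Type*} (K : Finset α) (J : Finset β)
    (P : α × β → Prop) [DecidablePred P] :
    #{p ∈ K ×ˢ J | P p} = ∑ k ∈ K, #{j ∈ J | P (k, j)} := by
  simp only [card_filter, sum_product]

theorem card_filter_product_eq_sum_right {α β : Type*} (K : Finset α) (J : Finset β)
    (P : α × β → Prop) [DecidablePred P] :
    #{p ∈ K ×ˢ J | P p} = ∑ j ∈ J, #{k ∈ K | P (k, j)} := by
  simp only [card_filter, sum_product_right]

theorem card_mul_le_card_filter_product {α β : Type*} (K : Finset α) {K' : Finset α} (J : Finset β)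
    (P : α × β → Prop) [DecidablePred P] (hK' : K' ⊆ K) {B : ℝ}
    (hB : ∀ k ∈ K', B ≤ #{j ∈ J | P (k, j)}) : #K' * B ≤ #{p ∈ K ×ˢ J | P p} := by
  rw [card_filter_product_eq_sum, Nat.cast_sum]
  calc #K' * B = ∑ _k ∈ K', B := by rw [sum_const, nsmul_eq_mul]
    _ ≤ ∑ k ∈ K', (#{j ∈ J | P (k, j)} : ℝ) := sum_le_sum hB
    _ ≤ ∑ k ∈ K, (#{j ∈ J | P (k, j)} : ℝ) :=
        sum_le_sum_of_subset_of_nonneg hK' fun _ _ _ => by positivity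

theorem card_mul_le_card_filter_product_right {α β : Type*} (K : Finset α) {J J' : Finset β}
    (P : α × β → Prop) [DecidablePred P] (hJ' : J' ⊆ J) {B : ℝ}
    (hB : ∀ j ∈ J', B ≤ #{k ∈ K | P (k, j)}) : #J' * B ≤ #{p ∈ K ×ˢ J | P p} := by
  rw [card_filter_product_eq_sum_right, Nat.cast_sum]
  calc #J' * B = ∑ _j ∈ J', B := by rw [sum_const, nsmul_eq_mul]
    _ ≤ ∑ j ∈ J', (#{k ∈ K | P (k, j)} : ℝ) := sum_le_sum hB
    _ ≤ ∑ j ∈ J, (#{k ∈ K | P (k, j)} : ℝ) :=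
        sum_le_sum_of_subset_of_nonneg hJ' fun _ _ _ => by positivity

theorem Int.add_two_le_of_odd_of_lt {x y : ℤ} (hx : Odd x) (hy : Odd y) (h : x < y) :
    x + 2 ≤ y := by
  rw [Int.odd_iff] at hx hy
  omega

theorem le_card_filter_odd_Icc {a b : ℤ} {n : ℕ} (h : a + 2 * n ≤ b) :
    n ≤ #{k ∈ Icc a b | Odd k} := by
  have := card_le_card_of_injOn (fun i : ℕ => 2 * (a / 2 + i) + 1) (s := range n)
    (t := {k ∈ Icc a b | Odd k}) (fun i hi => by
      simp only [coe_range, Set.mem_Iio] at hi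
      simp only [coe_filter, mem_Icc, Set.mem_ofPred_eq]
      exact ⟨by omega, odd_two_mul_add_one _⟩)
    (fun i _ i' _ h => by simp only at h; omega)
  simpa using this

section QuadraticForm

variable {N : ℕ}

theorem quadratic_form_mem_Icc {k j : ℤ} (hk : (N : ℤ) ≤ k ∧ k ≤ 3 * N)
    (hj : 2 * (N : ℤ) ≤ j ∧ j ≤ 3 * N) :
    5 * (N : ℝ) ^ 2 ≤ ((k * (2 * j + k) : ℤ) : ℝ) ∧
      ((k * (2 * j + k) : ℤ) : ℝ) ≤ 27 * (N : ℝ) ^ 2 := by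
  obtain ⟨hk₁, hk₂⟩ := hk
  obtain ⟨hj₁, hj₂⟩ := hj
  have hk₁' : (N : ℝ) ≤ k := by exact_mod_cast hk₁
  have hk₂' : (k : ℝ) ≤ 3 * N := by exact_mod_cast hk₂
  have hj₁' : 2 * (N : ℝ) ≤ j := by exact_mod_cast hj₁
  have hj₂' : (j : ℝ) ≤ 3 * N := by exact_mod_cast hj₂
  push_cast
  constructor <;> nlinarith

theorem twelve_mul_le_quadratic_form_sub {x y j : ℤ} (hx : (N : ℤ) ≤ x) (hj : 2 * (N : ℤ) ≤ j)
    (hxy : x + 2 ≤ y) :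
    12 * (N : ℝ) ≤ ((y * (2 * j + y) : ℤ) : ℝ) - ((x * (2 * j + x) : ℤ) : ℝ) := by
  have hx' : (N : ℝ) ≤ x := by exact_mod_cast hx
  have hj' : 2 * (N : ℝ) ≤ j := by exact_mod_cast hj
  have hxy' : (x : ℝ) + 2 ≤ y := by exact_mod_cast hxy
  push_cast
  nlinarith

end QuadraticForm

theorem cluster_bound_of_medium (N ψ ε : ℝ) (hN : 4 ≤ N) (hε : 0 < ε) (hε' : ε ≤ 1 / 32)
    (hψ₁ : 1 / (60 * N ^ 2) < ψ) (hψ₂ : ψ ≤ 1 / (48 * N)) :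
    (22 * ψ * N ^ 2 + ε / 2 + 1) * (ε / (24 * ψ * N) + 1) ≤ 7 * N / 8 := by
  have hN0 : 0 < N := by linarith
  have hψ : 0 < ψ := lt_trans (by positivity) hψ₁
  rw [div_lt_iff₀ (by positivity)] at hψ₁
  rw [le_div_iff₀ (by positivity)] at hψ₂
  rw [div_add_one (by positivity), mul_div_assoc', div_le_iff₀ (by positivity)]
  nlinarith [mul_pos hψ hN0, mul_pos (mul_pos hψ hN0) hN0, mul_pos hε hψ,
    mul_pos (mul_pos hε hψ) hN0]

theorem cluster_bound_of_large (N ψ ε : ℝ) (hN : 4 ≤ N) (hε' : ε ≤ 1 / 32)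
    (hψ₁ : 1 / (48 * N) < ψ) (hψ₂ : ψ ≤ ε / 2) :
    (4 * ψ * N + ε + 1) * (ε / (4 * ψ) + 1) ≤ 7 * N / 8 := by
  have hN0 : 0 < N := by linarith
  have hψ : 0 < ψ := lt_trans (by positivity) hψ₁
  rw [div_lt_iff₀ (by positivity)] at hψ₁
  rw [div_add_one (by positivity), mul_div_assoc', div_le_iff₀ (by positivity)]
  nlinarith [mul_pos hψ hN0, mul_nonneg (sub_nonneg.2 hψ₁.le) (sub_nonneg.2 hψ₂)]

noncomputable def farPairs (N : ℕ) (K : Finset ℤ) (δ ψ c : ℝ) : Finset (ℤ × ℤ) :=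
  {p ∈ K ×ˢ Icc (2 * (N : ℤ)) (3 * N) | ¬NearInt δ (ψ * ((p.1 * (2 * p.2 + p.1) : ℤ) : ℝ) - c)}

section FarPairs

variable {N : ℕ} {ε ψ c : ℝ}

theorem cast_card_Icc_two_mul_three_mul (N : ℕ) : (#(Icc (2 * (N : ℤ)) (3 * N)) : ℝ) = N + 1 := by
  rw [Int.cast_card_Icc (by omega)]
  push_cast
  ring

theorem le_card_filter_odd_Icc_three_mul (N : ℕ) :
    (N : ℝ) ≤ #{k ∈ Icc (N : ℤ) (3 * N) | Odd k} := by
  exact_mod_cast le_card_filter_odd_Icc (by omega)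

theorem half_le_card_filter_not_nearInt_row {δ : ℝ} (k : ℤ) (hk : ¬NearInt (2 * δ) (2 * ψ * k)) :
    (N : ℝ) / 2 ≤
      #{j ∈ Icc (2 * (N : ℤ)) (3 * N) | ¬NearInt δ (ψ * ((k * (2 * j + k) : ℤ) : ℝ) - c)} := by
  have := sub_div_two_le_card_filter_not_nearInt (a := 2 * N) (b := 3 * N) (by omega)
    (fun j => ψ * ((k * (2 * j + k) : ℤ) : ℝ) - c) (fun t => by push_cast; ring) hk
  calc (N : ℝ) / 2 = (((3 * N : ℤ) : ℝ) - ((2 * N : ℤ) : ℝ)) / 2 := by push_cast; ring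
    _ ≤ _ := this

theorem le_card_farPairs_of_not_nearInt {θ : ℝ} (hθ : ¬NearInt ε (2 * θ)) :
    (N : ℝ) ^ 2 / 2 ≤ #(farPairs N (Icc (N : ℤ) (3 * N)) (ε / 4) θ 0) := by
  have hrows : (N : ℝ) ≤ #{k ∈ Icc (N : ℤ) (3 * N) | ¬NearInt (ε / 2) (2 * θ * (k : ℤ))} := by
    have := sub_div_two_le_card_filter_not_nearInt (a := N) (b := 3 * N) (by omega)
      (fun k => 2 * θ * k) (α := 2 * θ) (δ := ε / 2) (fun t => by push_cast; ring)
      (by rwa [show 2 * (ε / 2) = ε by ring])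
    calc (N : ℝ) = (((3 * N : ℤ) : ℝ) - ((N : ℤ) : ℝ)) / 2 := by push_cast; ring
      _ ≤ _ := this
  have := card_mul_le_card_filter_product _ (Icc (2 * (N : ℤ)) (3 * N))
    (fun p => ¬NearInt (ε / 4) (θ * ((p.1 * (2 * p.2 + p.1) : ℤ) : ℝ) - 0))
    (filter_subset _ (Icc (N : ℤ) (3 * N)))
    fun k hk => half_le_card_filter_not_nearInt_row (N := N) (c := 0) k <| by
      rw [show 2 * (ε / 4) = ε / 2 by ring]; exact (mem_filter.1 hk).2
  rw [farPairs]
  nlinarith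

theorem le_card_farPairs_of_small (hN : 0 < N) (hε : 0 < ε) (hε' : ε ≤ 1 / 32) (hψ₀ : 0 ≤ ψ)
    (hψ : ψ ≤ 1 / (60 * N ^ 2)) (hc : ε / N ^ 2 ≤ ψ ∧ c = 0 ∨ c = 1 / 2) :
    (N : ℝ) ^ 2 / 16 ≤ #(farPairs N {k ∈ Icc (N : ℤ) (3 * N) | Odd k} (ε / 4) ψ c) := by
  have hN' : (0 : ℝ) < N := by exact_mod_cast hN
  rw [le_div_iff₀ (by positivity)] at hψ
  have hall : ∀ p ∈ {k ∈ Icc (N : ℤ) (3 * N) | Odd k} ×ˢ Icc (2 * (N : ℤ)) (3 * N),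
      ¬NearInt (ε / 4) (ψ * ((p.1 * (2 * p.2 + p.1) : ℤ) : ℝ) - c) := by
    rintro ⟨k, j⟩ hp
    simp only [mem_product, mem_filter, mem_Icc] at hp
    obtain ⟨hm₁, hm₂⟩ := quadratic_form_mem_Icc hp.1.1 hp.2
    have hup := mul_le_mul_of_nonneg_left hm₂ hψ₀
    rcases hc with ⟨hψ', rfl⟩ | rfl
    · rw [div_le_iff₀ (by positivity)] at hψ'
      have hlow := mul_le_mul_of_nonneg_left hm₁ hψ₀
      exact NearInt.not_of_mem_Ioo 0 (by rw [Int.cast_zero]; linarith)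
        (by rw [Int.cast_zero]; linarith)
    · exact NearInt.not_of_mem_Ioo (-1) (by rw [Int.cast_neg, Int.cast_one]; nlinarith)
        (by rw [Int.cast_neg, Int.cast_one]; linarith)
  rw [farPairs, filter_true_of_mem hall, card_product, Nat.cast_mul,
    cast_card_Icc_two_mul_three_mul]
  nlinarith [le_card_filter_odd_Icc_three_mul N]

theorem le_card_farPairs_of_medium (hN : 4 ≤ N) (hε : 0 < ε) (hε' : ε ≤ 1 / 32)
    (hψ₁ : 1 / (60 * N ^ 2) < ψ) (hψ₂ : ψ ≤ 1 / (48 * N)) :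
    (N : ℝ) ^ 2 / 16 ≤ #(farPairs N {k ∈ Icc (N : ℤ) (3 * N) | Odd k} (ε / 4) ψ c) := by
  have hN' : (4 : ℝ) ≤ N := by exact_mod_cast hN
  have hψ : 0 < ψ := lt_trans (by positivity) hψ₁
  have hcols : ∀ j ∈ Icc (2 * (N : ℤ)) (3 * N), (N : ℝ) / 8 ≤
      #{k ∈ {k ∈ Icc (N : ℤ) (3 * N) | Odd k} |
        ¬NearInt (ε / 4) (ψ * ((k * (2 * j + k) : ℤ) : ℝ) - c)} := by
    intro j hj
    rw [mem_Icc] at hj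
    have := card_sub_le_card_filter_not_nearInt {k ∈ Icc (N : ℤ) (3 * N) | Odd k}
      (fun k => ψ * ((k * (2 * j + k) : ℤ) : ℝ) - c) (σ := 12 * N * ψ) (δ := ε / 4)
      (a := 5 * ψ * N ^ 2 - c) (b := 27 * ψ * N ^ 2 - c) (by positivity) (by positivity)
      (by nlinarith)
      (fun x hx y hy hxy => by
        simp only [mem_filter, mem_Icc] at hx hy
        have := mul_le_mul_of_nonneg_left (twelve_mul_le_quadratic_form_sub hx.1.1 hj.1
          (Int.add_two_le_of_odd_of_lt hx.2 hy.2 hxy)) hψ.le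
        linarith)
      (fun x hx => by
        simp only [mem_filter, mem_Icc] at hx
        obtain ⟨h₁, h₂⟩ := quadratic_form_mem_Icc hx.1 hj
        constructor <;> nlinarith)
    have hb := cluster_bound_of_medium N ψ ε hN' hε hε' hψ₁ hψ₂
    have he : (27 * ψ * N ^ 2 - c - (5 * ψ * N ^ 2 - c) + 2 * (ε / 4) + 1) *
        (2 * (ε / 4) / (12 * N * ψ) + 1) =
          (22 * ψ * N ^ 2 + ε / 2 + 1) * (ε / (24 * ψ * N) + 1) := by ring
    linarith [le_card_filter_odd_Icc_three_mul N]
  have := card_mul_le_card_filter_product_right {k ∈ Icc (N : ℤ) (3 * N) | Odd k}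
    (fun p => ¬NearInt (ε / 4) (ψ * ((p.1 * (2 * p.2 + p.1) : ℤ) : ℝ) - c)) (subset_refl _) hcols
  rw [cast_card_Icc_two_mul_three_mul] at this
  rw [farPairs]
  nlinarith

theorem le_card_farPairs_of_large (hN : 4 ≤ N) (hε' : ε ≤ 1 / 32)
    (hψ₁ : 1 / (48 * N) < ψ) (hψ₂ : ψ ≤ ε / 2) :
    (N : ℝ) ^ 2 / 16 ≤ #(farPairs N {k ∈ Icc (N : ℤ) (3 * N) | Odd k} (ε / 4) ψ c) := by
  have hN' : (4 : ℝ) ≤ N := by exact_mod_cast hN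
  have hψ : 0 < ψ := lt_trans (by positivity) hψ₁
  have hrows : (N : ℝ) / 8 ≤
      #{k ∈ {k ∈ Icc (N : ℤ) (3 * N) | Odd k} | ¬NearInt (ε / 2) (2 * ψ * (k : ℤ))} := by
    have := card_sub_le_card_filter_not_nearInt {k ∈ Icc (N : ℤ) (3 * N) | Odd k}
      (fun k => 2 * ψ * k) (σ := 4 * ψ) (δ := ε / 2) (a := 2 * ψ * N) (b := 6 * ψ * N)
      (by positivity) (by linarith) (by nlinarith)
      (fun x hx y hy hxy => by
        simp only [mem_filter] at hx hy
        have : (x : ℝ) + 2 ≤ y := by exact_mod_cast Int.add_two_le_of_odd_of_lt hx.2 hy.2 hxy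
        nlinarith)
      (fun x hx => by
        simp only [mem_filter, mem_Icc] at hx
        have h₁ : (N : ℝ) ≤ x := by exact_mod_cast hx.1.1
        have h₂ : (x : ℝ) ≤ 3 * N := by exact_mod_cast hx.1.2
        constructor <;> nlinarith)
    have hb := cluster_bound_of_large N ψ ε hN' hε' hψ₁ hψ₂
    have he : (6 * ψ * N - 2 * ψ * N + 2 * (ε / 2) + 1) * (2 * (ε / 2) / (4 * ψ) + 1) =
        (4 * ψ * N + ε + 1) * (ε / (4 * ψ) + 1) := by ring
    linarith [le_card_filter_odd_Icc_three_mul N]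
  have := card_mul_le_card_filter_product _ (Icc (2 * (N : ℤ)) (3 * N))
    (fun p => ¬NearInt (ε / 4) (ψ * ((p.1 * (2 * p.2 + p.1) : ℤ) : ℝ) - c))
    (filter_subset _ {k ∈ Icc (N : ℤ) (3 * N) | Odd k}) fun k hk =>
      half_le_card_filter_not_nearInt_row (N := N) (c := c) k <| by
        rw [show 2 * (ε / 4) = ε / 2 by ring]; exact (mem_filter.1 hk).2
  rw [farPairs]
  nlinarith

theorem le_card_farPairs_odd (hN : 4 ≤ N) (hε : 0 < ε) (hε' : ε ≤ 1 / 32) (hψ₀ : 0 ≤ ψ)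
    (hψ : ψ ≤ ε / 2) (hc : ε / N ^ 2 ≤ ψ ∧ c = 0 ∨ c = 1 / 2) :
    (N : ℝ) ^ 2 / 16 ≤ #(farPairs N {k ∈ Icc (N : ℤ) (3 * N) | Odd k} (ε / 4) ψ c) := by
  rcases le_or_gt ψ (1 / (60 * N ^ 2)) with h₁ | h₁
  · exact le_card_farPairs_of_small (by omega) hε hε' hψ₀ h₁ hc
  rcases le_or_gt ψ (1 / (48 * N)) with h₂ | h₂
  · exact le_card_farPairs_of_medium hN hε hε' h₁ h₂
  · exact le_card_farPairs_of_large hN hε' h₂ hψ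

theorem card_farPairs_odd_le {δ θ : ℝ}
    (h : ∀ k j : ℤ, Odd k → ¬NearInt δ (ψ * ((k * (2 * j + k) : ℤ) : ℝ) - c) →
      ¬NearInt δ (θ * ((k * (2 * j + k) : ℤ) : ℝ))) :
    #(farPairs N {k ∈ Icc (N : ℤ) (3 * N) | Odd k} δ ψ c) ≤
      #(farPairs N (Icc (N : ℤ) (3 * N)) δ θ 0) := by
  refine card_le_card fun p hp => ?_
  simp only [farPairs, mem_filter, mem_product, sub_zero] at hp ⊢
  exact ⟨⟨hp.1.1.1, hp.1.2⟩, h p.1 p.2 hp.1.1.2 hp.2⟩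

theorem le_card_farPairs {θ : ℝ} (hN : 4 ≤ N) (hε : 0 < ε) (hε' : ε ≤ 1 / 32)
    (hθ : ε / N ^ 2 ≤ θ) (hθ' : θ ≤ 1 / 2) :
    (N : ℝ) ^ 2 / 16 ≤ #(farPairs N (Icc (N : ℤ) (3 * N)) (ε / 4) θ 0) := by
  have hθ₀ : 0 < θ := lt_of_lt_of_le (by positivity) hθ
  by_cases hnear : NearInt ε (2 * θ)
  · have h2θ : 2 * θ ≤ ε ∨ 1 - ε ≤ 2 * θ := by
      by_contra! h
      exact NearInt.not_of_mem_Ioo 0 (by simpa using h.1) (by simpa using h.2) hnear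
    rcases h2θ with h | h
    · refine (le_card_farPairs_odd hN hε hε' hθ₀.le (by linarith) (Or.inl ⟨hθ, rfl⟩)).trans ?_
      exact_mod_cast card_farPairs_odd_le fun k j _ hkj => by rwa [sub_zero] at hkj
    · refine (le_card_farPairs_odd (ψ := 1 / 2 - θ) hN hε hε' (by linarith) (by linarith)
        (Or.inr rfl)).trans ?_
      exact_mod_cast card_farPairs_odd_le fun k j hk hkj => by
        rwa [NearInt.half_sub_mul_sub_half_iff (hk.mul ((even_two_mul j).add_odd hk))] at hkj
  · linarith [le_card_farPairs_of_not_nearInt (N := N) hnear, sq_nonneg (N : ℝ)]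

end FarPairs

/-- Lemma A.4: for `ε/N² ≤ θ ≤ 1/2`, at least `N²/16` of the pairs `(k,j)` with
`N ≤ k ≤ 3N`, `2N ≤ j ≤ 3N` satisfy `ε/4 < {θ·k(2j+k)} < 1 - ε/4`. -/
theorem stmt8 (N : ℕ) (hN : 4 ≤ N) (ε : ℝ) (hε : 0 < ε) (hε' : ε ≤ 1 / 32)
    (θ : ℝ) (hθ : ε / (N : ℝ) ^ 2 ≤ θ) (hθ' : θ ≤ 1 / 2) :
    (N : ℝ) ^ 2 / 16 ≤
      ({p : ℤ × ℤ | (N : ℤ) ≤ p.1 ∧ p.1 ≤ 3 * N ∧ 2 * (N : ℤ) ≤ p.2 ∧ p.2 ≤ 3 * N ∧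
        ε / 4 < Int.fract (θ * ((p.1 * (2 * p.2 + p.1) : ℤ) : ℝ)) ∧
        Int.fract (θ * ((p.1 * (2 * p.2 + p.1) : ℤ) : ℝ)) < 1 - ε / 4}.ncard : ℝ) := by
  refine (le_card_farPairs hN hε hε' hθ hθ').trans ?_
  rw [← Set.ncard_coe_finset]
  refine Nat.cast_le.2 (Set.ncard_le_ncard (fun p hp => ?_) ?_)
  · simp only [farPairs, coe_filter, mem_product, mem_Icc, sub_zero, Set.mem_ofPred_eq] at hp
    exact ⟨hp.1.1.1, hp.1.1.2, hp.1.2.1, hp.1.2.2, NearInt.fract_mem_Ioo_of_not hp.2⟩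
  · refine (Icc (N : ℤ) (3 * N) ×ˢ Icc (2 * (N : ℤ)) (3 * N)).finite_toSet.subset fun p hp => ?_
    simp only [coe_product, coe_Icc, Set.mem_prod, Set.mem_Icc]
    exact ⟨⟨hp.1, hp.2.1⟩, hp.2.2.1, hp.2.2.2.1⟩
end

section
/- Let 0 < ε ≤ 1/32, N ∈ ℕ with N ≥ 4, and θ ∈ ℝ with ε/N³ ≤ θ ≤ 1/2. Then the number of pairs of integers (k,j) with N ≤ k ≤ 3N, N ≤ j ≤ 4N, and ε/8 < {θ · a₂(k,j)} < 1 − ε/8 is at least N²/32, where a₂(k,j) := kj(k+j)/2. -/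
/-!
Write `‖x‖ = distToInt x` for the distance from `x` to the nearest integer, so that `(k, j)` is
counted iff `‖θ a₂(k, j)‖ > ε/8`. Along a row `k` the phase `j ↦ θ a₂(k, j)` has increments
`θk(k + 2j + 1)/2`, and there are three regimes.

* `θ ≤ 1/(2N³)`: on `[N, 6N/5]²` the phase lies in `[ε, 108/125]`, so all these pairs count.
* `θ ≤ 1/(5N²)`: for `k ≤ 6N/5` the phase increases by at least `3θN²/2` per step and by at most
  `12θN³ ≤ 12N/5` in total, so at most `5N/2 + 1` of the `3N + 1` values of `j` put it
  `ε/8`-close to an integer.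
* otherwise: in a row with `‖θk‖ ≥ 1/(2N)`, two consecutive bad `j` make the increment, an
  arithmetic progression in `j` with step `θk`, `ε/4`-close to an integer; this happens for at most
  `2N` of the `3N` values of `j`, so at least `N/2` of them count. At least `N/4` rows of
  `[N, 3N]` are of this kind: otherwise differences of the other rows give `‖θd‖ < 1/N` for
  `d = 1, 2, 4`, hence `θ < 1/(4N)`, and then one of them with `k ≥ 11N/4` has `θk < 1/(2N)`,
  i.e. `θ < 2/(11N²)`.
-/

open Finset

noncomputable def distToInt (x : ℝ) : ℝ := |x - round x|

theorem distToInt_le_abs_sub_intCast (x : ℝ) (n : ℤ) : distToInt x ≤ |x - n| := round_le x n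

theorem distToInt_add_intCast (x : ℝ) (n : ℤ) : distToInt (x + n) = distToInt x := by
  simp only [distToInt, round_add_intCast, Int.cast_add, add_sub_add_right_eq_sub]

theorem distToInt_neg (x : ℝ) : distToInt (-x) = distToInt x := by
  have key (y : ℝ) : distToInt (-y) ≤ distToInt y := by
    simpa [distToInt, abs_sub_comm, neg_add_eq_sub] using
      distToInt_le_abs_sub_intCast (-y) (-round y)
  exact le_antisymm (key x) (by simpa using key (-x))

theorem distToInt_sub_le (x y : ℝ) : distToInt (x - y) ≤ distToInt x + distToInt y := by
  have : distToInt (x - y) ≤ |(x - round x) - (y - round y)| := by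
    simpa [sub_sub_sub_comm] using distToInt_le_abs_sub_intCast (x - y) (round x - round y)
  exact this.trans (abs_sub _ _)

theorem lt_distToInt_iff {η x : ℝ} :
    η < distToInt x ↔ η < Int.fract x ∧ Int.fract x < 1 - η := by
  rw [distToInt, abs_sub_round_eq_min, lt_min_iff, lt_sub_comm]

theorem lt_distToInt_of_mem_Ioo {η x : ℝ} (hη : 0 ≤ η) (h₀ : η < x) (h₁ : x < 1 - η) :
    η < distToInt x := by
  have hx : Int.fract x = x := Int.fract_eq_self.2 ⟨by linarith, by linarith⟩
  rw [lt_distToInt_iff, hx]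
  exact ⟨h₀, h₁⟩

theorem lt_of_distToInt_lt {x δ : ℝ} (hx : 0 ≤ x) (hxδ : x + δ ≤ 1) (h : distToInt x < δ) :
    x < δ := by
  rw [distToInt, abs_lt] at h
  have hround : round x = 0 := by
    have h₁ : (round x : ℝ) < 1 := by linarith
    have h₂ : (-1 : ℝ) < round x := by linarith
    have h₁ : round x < 1 := by exact_mod_cast h₁
    have h₂ : -1 < round x := by exact_mod_cast h₂
    omega
  simpa [hround] using h.2

section Counting

variable {f : ℤ → ℝ} {a b : ℤ} {s : ℝ}

theorem mul_sub_le_sub_of_le_step (hstep : ∀ i ∈ Ico a b, s ≤ f (i + 1) - f i) {i j : ℤ}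
    (hai : a ≤ i) (hij : i ≤ j) (hjb : j ≤ b) : s * (j - i) ≤ f j - f i := by
  induction j, hij using Int.leInduction with
  | base => simp
  | succ j hij ih =>
    have := hstep j (mem_Ico.2 ⟨hai.trans hij, by omega⟩)
    push_cast
    linarith [ih (by omega)]

theorem card_mul_le_of_abs_sub_le (hstep : ∀ i ∈ Ico a b, s ≤ f (i + 1) - f i) (hs : 0 ≤ s)
    {S : Finset ℤ} (hS : S ⊆ Icc a b) {c η : ℝ} (hη : 0 ≤ η) (hc : ∀ i ∈ S, |f i - c| ≤ η) :
    #S * s ≤ 2 * η + s := by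
  rcases S.eq_empty_or_nonempty with rfl | hne
  · simp only [card_empty, CharP.cast_eq_zero, zero_mul]
    positivity
  set i₁ := S.min' hne
  set i₂ := S.max' hne
  have hcard : (#S : ℝ) ≤ i₂ - i₁ + 1 := by
    have hsub : S ⊆ Icc i₁ i₂ := fun i hi => mem_Icc.2 ⟨S.min'_le i hi, S.le_max' i hi⟩
    have h₁₂ : i₁ ≤ i₂ := S.min'_le _ (S.max'_mem hne)
    have := card_le_card hsub
    rw [Int.card_Icc] at this
    have : ((#S : ℤ) : ℝ) ≤ ((i₂ + 1 - i₁ : ℤ) : ℝ) := by exact_mod_cast (by omega)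
    push_cast at this
    linarith
  have hgap := mul_sub_le_sub_of_le_step hstep (mem_Icc.1 (hS (S.min'_mem hne))).1
    (S.min'_le _ (S.max'_mem hne)) (mem_Icc.1 (hS (S.max'_mem hne))).2
  have h₁ := abs_le.1 (hc _ (S.min'_mem hne))
  have h₂ := abs_le.1 (hc _ (S.max'_mem hne))
  nlinarith

/-- The `η`-bad points near one integer form a run of length at most `2η/s + 1`, and only about
`f b - f a + 2η + 1` integers are within reach. -/
theorem card_filter_distToInt_le_mul_le (hstep : ∀ i ∈ Ico a b, s ≤ f (i + 1) - f i)
    (hs : 0 < s) (hab : a ≤ b) {η : ℝ} (hη : 0 ≤ η) :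
    #{i ∈ Icc a b | distToInt (f i) ≤ η} * s ≤ (f b - f a + 2 * η + 1) * (2 * η + s) := by
  set B := {i ∈ Icc a b | distToInt (f i) ≤ η}
  have hmono {i : ℤ} (hi : i ∈ Icc a b) : f a ≤ f i ∧ f i ≤ f b := by
    rw [mem_Icc] at hi
    have := mul_sub_le_sub_of_le_step hstep le_rfl hi.1 hi.2
    have := mul_sub_le_sub_of_le_step hstep hi.1 hi.2 le_rfl
    have : (a : ℝ) ≤ i := by exact_mod_cast hi.1
    have : (i : ℝ) ≤ b := by exact_mod_cast hi.2
    constructor <;> nlinarith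
  have himage : B.image (fun i => round (f i)) ⊆ Icc ⌈f a - η⌉ ⌊f b + η⌋ := by
    intro n hn
    obtain ⟨i, hi, rfl⟩ := mem_image.1 hn
    obtain ⟨hiab, hiη⟩ := mem_filter.1 hi
    have := abs_le.1 hiη
    have := hmono hiab
    exact mem_Icc.2 ⟨Int.ceil_le.2 (by linarith), Int.le_floor.2 (by linarith)⟩
  have hfiber (n : ℤ) : #{i ∈ B | round (f i) = n} * s ≤ 2 * η + s := by
    refine card_mul_le_of_abs_sub_le (c := n) hstep hs.le
      ((filter_subset _ _).trans (filter_subset _ _)) hη fun i hi => ?_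
    obtain ⟨hiB, rfl⟩ := mem_filter.1 hi
    exact (mem_filter.1 hiB).2
  have hspan : 0 ≤ f b - f a := by linarith [hmono (left_mem_Icc.2 hab)]
  calc #B * s = ∑ n ∈ B.image (fun i => round (f i)), #{i ∈ B | round (f i) = n} * s := by
        rw [card_eq_sum_card_image (fun i => round (f i)) B, Nat.cast_sum, sum_mul]
    _ ≤ ∑ n ∈ B.image (fun i => round (f i)), (2 * η + s) := sum_le_sum fun n _ => hfiber n
    _ ≤ #(Icc ⌈f a - η⌉ ⌊f b + η⌋) * (2 * η + s) := by
        rw [sum_const, nsmul_eq_mul]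
        gcongr
    _ ≤ (f b - f a + 2 * η + 1) * (2 * η + s) := by
        gcongr
        linarith [card_Icc_ceil_floor_le (by linarith : f a - η ≤ f b + η)]

end Counting

theorem card_filter_distToInt_add_mul_le_mul_le (x r : ℝ) (hr : 0 < distToInt r) {a b : ℤ}
    (hab : a ≤ b) {η : ℝ} (hη : 0 ≤ η) :
    #{t ∈ Icc a b | distToInt (x + ((t : ℤ) : ℝ) * r) ≤ η} * distToInt r
      ≤ ((b - a) * distToInt r + 2 * η + 1) * (2 * η + distToInt r) := by
  set ρ := r - round r
  have hρ : distToInt r = |ρ| := rfl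
  have hshift (t : ℤ) : distToInt (x + t * r) = distToInt (x + t * ρ) := by
    rw [← distToInt_add_intCast (x + t * ρ) (t * round r)]
    push_cast
    congr 1
    ring
  obtain ⟨σ, hσ, hσρ⟩ : ∃ σ : ℝ, (σ = 1 ∨ σ = -1) ∧ σ * ρ = |ρ| := by
    rcases abs_choice ρ with h | h
    · exact ⟨1, Or.inl rfl, by rw [h, one_mul]⟩
    · exact ⟨-1, Or.inr rfl, by rw [h, neg_one_mul]⟩
  have hσdist (y : ℝ) : distToInt (σ * y) = distToInt y := by
    rcases hσ with rfl | rfl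
    · rw [one_mul]
    · rw [neg_one_mul, distToInt_neg]
  have hstep : ∀ t ∈ Ico a b, |ρ| ≤ σ * (x + ↑(t + 1) * ρ) - σ * (x + t * ρ) := by
    intro t _
    push_cast
    linarith
  have := card_filter_distToInt_le_mul_le (f := fun t : ℤ => σ * (x + t * ρ)) hstep
    (hρ ▸ hr) hab hη
  simp only [hσdist] at this
  simp only [hshift, hρ]
  convert this using 2
  rw [← hσρ]
  ring

noncomputable def phase (θ : ℝ) (k j : ℤ) : ℝ := θ * (((k * j * (k + j) : ℤ) : ℝ) / 2)

theorem phase_succ_sub_phase (θ : ℝ) (k j : ℤ) :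
    phase θ k (j + 1) - phase θ k j = θ * k * (k + 1) / 2 + j * (θ * k) := by
  simp only [phase]
  push_cast
  ring

noncomputable def goodRow (N : ℕ) (ε θ : ℝ) (k : ℤ) : Finset ℤ :=
  {j ∈ Icc (N : ℤ) (4 * N) | ε / 8 < distToInt (phase θ k j)}

theorem ncard_eq_sum_card_goodRow (N : ℕ) (ε θ : ℝ) :
    {p : ℤ × ℤ | (N : ℤ) ≤ p.1 ∧ p.1 ≤ 3 * N ∧ (N : ℤ) ≤ p.2 ∧ p.2 ≤ 4 * N ∧
        ε / 8 < Int.fract (θ * (((p.1 * p.2 * (p.1 + p.2) : ℤ) : ℝ) / 2)) ∧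
        Int.fract (θ * (((p.1 * p.2 * (p.1 + p.2) : ℤ) : ℝ) / 2)) < 1 - ε / 8}.ncard =
      ∑ k ∈ Icc (N : ℤ) (3 * N), #(goodRow N ε θ k) := by
  have hset : {p : ℤ × ℤ | (N : ℤ) ≤ p.1 ∧ p.1 ≤ 3 * N ∧ (N : ℤ) ≤ p.2 ∧ p.2 ≤ 4 * N ∧
        ε / 8 < Int.fract (θ * (((p.1 * p.2 * (p.1 + p.2) : ℤ) : ℝ) / 2)) ∧
        Int.fract (θ * (((p.1 * p.2 * (p.1 + p.2) : ℤ) : ℝ) / 2)) < 1 - ε / 8} =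
      ↑{p ∈ Icc (N : ℤ) (3 * N) ×ˢ Icc (N : ℤ) (4 * N) | ε / 8 < distToInt (phase θ p.1 p.2)} := by
    ext p
    simp [lt_distToInt_iff, phase, and_assoc]
  rw [hset, Set.ncard_coe_finset, card_filter, sum_product]
  simp only [goodRow, card_filter]

theorem mul_le_sum_card_goodRow {N : ℕ} {ε θ R : ℝ} {K : Finset ℤ}
    (hK : K ⊆ Icc (N : ℤ) (3 * N)) (hR : ∀ k ∈ K, R ≤ #(goodRow N ε θ k)) :
    #K * R ≤ ∑ k ∈ Icc (N : ℤ) (3 * N), (#(goodRow N ε θ k) : ℝ) := by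
  have := card_nsmul_le_sum K _ R hR
  rw [nsmul_eq_mul] at this
  exact this.trans (sum_le_sum_of_subset_of_nonneg hK fun _ _ _ => Nat.cast_nonneg _)

noncomputable def initialBlock (N : ℕ) : Finset ℤ := Icc (N : ℤ) (N + N / 5)

theorem initialBlock_subset (N : ℕ) : initialBlock N ⊆ Icc (N : ℤ) (3 * N) :=
  Icc_subset_Icc le_rfl (by omega)

theorem bounds_of_mem_initialBlock {N : ℕ} {k : ℤ} (hk : k ∈ initialBlock N) :
    (N : ℝ) ≤ k ∧ (k : ℝ) ≤ 6 * N / 5 := by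
  obtain ⟨hk₁, hk₂⟩ := mem_Icc.1 hk
  have hdiv : (((N / 5 : ℤ) * 5 : ℤ) : ℝ) ≤ ((N : ℤ) : ℝ) := Int.cast_le.2 (by omega)
  have hk₂ : (k : ℝ) ≤ ((N + N / 5 : ℤ) : ℝ) := Int.cast_le.2 hk₂
  push_cast at hdiv hk₂
  exact ⟨by exact_mod_cast hk₁, by linarith⟩

theorem le_card_initialBlock (N : ℕ) : ((N : ℝ) + 1) / 5 ≤ #(initialBlock N) := by
  have hcard : #(initialBlock N) = N / 5 + 1 := by
    simp only [initialBlock, Int.card_Icc]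
    omega
  have : ((N : ℝ) + 1) ≤ 5 * ((N / 5 + 1 : ℕ) : ℝ) := by
    exact_mod_cast (by omega : N + 1 ≤ 5 * (N / 5 + 1))
  rw [hcard]
  linarith

theorem initialBlock_subset_goodRow {N : ℕ} (hN : 0 < N) {ε θ : ℝ} (hε : 0 < ε)
    (hε' : ε ≤ 1 / 32) (hθ : ε / (N : ℝ) ^ 3 ≤ θ) (hθ' : θ ≤ 1 / (2 * (N : ℝ) ^ 3)) {k : ℤ}
    (hk : k ∈ initialBlock N) : initialBlock N ⊆ goodRow N ε θ k := by
  intro j hj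
  refine mem_filter.2 ⟨Icc_subset_Icc le_rfl (by omega) hj, ?_⟩
  have hN0 : (0 : ℝ) < N := by exact_mod_cast hN
  obtain ⟨hk₁, hk₂⟩ := bounds_of_mem_initialBlock hk
  obtain ⟨hj₁, hj₂⟩ := bounds_of_mem_initialBlock hj
  have hkj₁ : (N : ℝ) * N ≤ k * j := mul_le_mul hk₁ hj₁ hN0.le (by linarith)
  have hkj₂ : (k : ℝ) * j ≤ (6 * N / 5) * (6 * N / 5) :=
    mul_le_mul hk₂ hj₂ (by linarith) (by linarith)
  have hP₁ : 2 * (N : ℝ) ^ 3 ≤ k * j * (k + j) := by nlinarith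
  have hP₂ : (k : ℝ) * j * (k + j) ≤ 432 / 125 * (N : ℝ) ^ 3 := by nlinarith
  have hθ₀ : ε ≤ θ * (N : ℝ) ^ 3 := (div_le_iff₀ (by positivity)).1 hθ
  have hθ₁ : θ * (N : ℝ) ^ 3 ≤ 1 / 2 := by
    rw [le_div_iff₀ (by positivity)] at hθ'
    linarith
  have hphase : phase θ k j = θ * (k * j * (k + j)) / 2 := by
    simp only [phase]
    push_cast
    ring
  have hθ0 : 0 ≤ θ := (by positivity : 0 ≤ ε / (N : ℝ) ^ 3).trans hθ
  apply lt_distToInt_of_mem_Ioo (by positivity) <;> rw [hphase] <;> nlinarith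

theorem card_goodRow_add_card_filter_le (N : ℕ) (ε θ : ℝ) (k : ℤ) :
    (#(goodRow N ε θ k) : ℝ) + #{j ∈ Icc (N : ℤ) (4 * N) | distToInt (phase θ k j) ≤ ε / 8}
      = 3 * N + 1 := by
  have h := card_filter_add_card_filter_not (s := Icc (N : ℤ) (4 * N))
    (p := fun j => ε / 8 < distToInt (phase θ k j))
  simp only [not_lt, Int.card_Icc] at h
  rw [show (4 * N + 1 - N : ℤ).toNat = 3 * N + 1 by omega] at h
  exact_mod_cast h

theorem phase_four_mul_sub_phase_le {N : ℕ} {θ : ℝ} (hθ : 0 ≤ θ) {k : ℤ} (hk : 0 ≤ (k : ℝ))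
    (hk' : (k : ℝ) ≤ 6 * N / 5) : phase θ k (4 * N) - phase θ k N ≤ 12 * θ * (N : ℝ) ^ 3 := by
  have hkk : (k : ℝ) * k ≤ (6 * N / 5) * (6 * N / 5) := mul_le_mul hk' hk' hk (by linarith)
  have hpoly : 3 * (k : ℝ) ^ 2 * N + 15 * k * N ^ 2 ≤ 24 * (N : ℝ) ^ 3 := by
    nlinarith [mul_le_mul_of_nonneg_right hkk (by positivity : (0 : ℝ) ≤ N),
      mul_le_mul_of_nonneg_right hk' (by positivity : (0 : ℝ) ≤ N ^ 2)]
  have hdiff : phase θ k (4 * N) - phase θ k N = θ * (3 * k ^ 2 * N + 15 * k * N ^ 2) / 2 := by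
    simp only [phase]
    push_cast
    ring
  rw [hdiff]
  nlinarith [mul_le_mul_of_nonneg_left hpoly hθ]

theorem half_le_card_goodRow_of_theta_mem_Ioc {N : ℕ} (hN : 4 ≤ N) {ε θ : ℝ} (hε : 0 < ε)
    (hε' : ε ≤ 1 / 32) (hθ : 1 / (2 * (N : ℝ) ^ 3) < θ) (hθ' : θ ≤ 1 / (5 * (N : ℝ) ^ 2))
    {k : ℤ} (hk : (N : ℝ) ≤ k) (hk' : (k : ℝ) ≤ 6 * N / 5) :
    (N : ℝ) / 2 ≤ #(goodRow N ε θ k) := by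
  have hN4 : (4 : ℝ) ≤ N := by exact_mod_cast hN
  have hθ0 : 0 < θ := (by positivity : (0 : ℝ) < 1 / (2 * (N : ℝ) ^ 3)).trans hθ
  set u := θ * (N : ℝ) ^ 2
  have hu₁ : 1 / 2 < u * N := by
    rw [div_lt_iff₀ (by positivity)] at hθ
    linarith
  have hu₂ : u ≤ 1 / 5 := by
    rw [le_div_iff₀ (by positivity)] at hθ'
    linarith
  have hstep : ∀ j ∈ Ico (N : ℤ) (4 * N), 3 * u / 2 ≤ phase θ k (j + 1) - phase θ k j := by
    intro j hj
    have hj : (N : ℝ) ≤ j := by exact_mod_cast (mem_Ico.1 hj).1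
    rw [phase_succ_sub_phase]
    nlinarith [mul_le_mul hk (by linarith : 3 * (N : ℝ) ≤ k + 2 * j + 1) (by positivity)
      (by linarith)]
  have hspan : phase θ k (4 * N) - phase θ k N ≤ 12 * u * N := by
    simpa [u, mul_assoc, ← pow_succ] using phase_four_mul_sub_phase_le hθ0.le (by linarith) hk'
  have hcount := card_filter_distToInt_le_mul_le hstep (by positivity) (by omega)
    (η := ε / 8) (by positivity)
  have hbad : (#{j ∈ Icc (N : ℤ) (4 * N) | distToInt (phase θ k j) ≤ ε / 8} : ℝ)
      ≤ 5 * N / 2 + 1 := by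
    refine le_of_mul_le_mul_right (hcount.trans ?_) (by positivity : 0 < 3 * u / 2)
    have huN : 0 ≤ u * N := by positivity
    calc _ ≤ (12 * u * N + 2 * (ε / 8) + 1) * (2 * (ε / 8) + 3 * u / 2) := by gcongr
      _ ≤ (5 * N / 2 + 1) * (3 * u / 2) := by
        nlinarith [mul_nonneg huN (by linarith : 0 ≤ 1 / 5 - u),
          mul_le_mul_of_nonneg_left hε' huN, mul_le_mul hε' hε' hε.le (by norm_num),
          mul_le_mul hu₂ hε' hε.le (by norm_num)]
  linarith [card_goodRow_add_card_filter_le N ε θ k]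

theorem half_le_card_goodRow_of_le_distToInt {N : ℕ} (hN : 4 ≤ N) {ε θ : ℝ} (hε : 0 < ε)
    (hε' : ε ≤ 1 / 32) {k : ℤ} (hk : 1 / (2 * N) ≤ distToInt (θ * k)) :
    (N : ℝ) / 2 ≤ #(goodRow N ε θ k) := by
  have hN4 : (4 : ℝ) ≤ N := by exact_mod_cast hN
  set G := goodRow N ε θ k
  set T := Icc (N : ℤ) (4 * N - 1)
  set B := {j ∈ T | distToInt (θ * k * (k + 1) / 2 + ((j : ℤ) : ℝ) * (θ * k)) ≤ ε / 4}
  set ρ := distToInt (θ * k)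
  have hρ₀ : 0 < ρ := (by positivity : (0 : ℝ) < 1 / (2 * N)).trans_le hk
  have hB : (#B : ℝ) ≤ 2 * N := by
    have hcount := card_filter_distToInt_add_mul_le_mul_le (θ * k * (k + 1) / 2) (θ * k) hρ₀
      (a := N) (b := 4 * N - 1) (by omega) (η := ε / 4) (by positivity)
    have hρN : 1 ≤ 2 * N * ρ := by rwa [div_le_iff₀ (by positivity), mul_comm] at hk
    have hρ₁ : ρ ≤ 1 / 2 := abs_sub_round _
    refine le_of_mul_le_mul_right (hcount.trans ?_) hρ₀
    push_cast
    nlinarith [mul_le_mul_of_nonneg_left hρ₁ hρ₀.le, mul_le_mul_of_nonneg_left hε' hρ₀.le,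
      mul_le_mul_of_nonneg_left hε' (by positivity : (0 : ℝ) ≤ N * ρ),
      mul_le_mul hε' hε' hε.le (by norm_num)]
  have hcover : T ⊆ B ∪ {j ∈ T | j ∈ G} ∪ {j ∈ T | j + 1 ∈ G} := by
    intro j hj
    by_cases hj₀ : j ∈ G
    · simp [hj, hj₀]
    by_cases hj₁ : j + 1 ∈ G
    · simp [hj, hj₁]
    have hjT := mem_Icc.1 hj
    have hbad {i : ℤ} (hi : i ∈ Icc (N : ℤ) (4 * N)) (hiG : i ∉ G) :
        distToInt (phase θ k i) ≤ ε / 8 :=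
      not_lt.1 fun h => hiG (mem_filter.2 ⟨hi, h⟩)
    have := distToInt_sub_le (phase θ k (j + 1)) (phase θ k j)
    rw [phase_succ_sub_phase] at this
    have h₀ := hbad (mem_Icc.2 ⟨by omega, by omega⟩) hj₀
    have h₁ := hbad (mem_Icc.2 ⟨by omega, by omega⟩) hj₁
    exact mem_union_left _ (mem_union_left _ (mem_filter.2 ⟨hj, by linarith⟩))
  have hG₀ : #{j ∈ T | j ∈ G} ≤ #G := card_le_card fun j hj => (mem_filter.1 hj).2
  have hG₁ : #{j ∈ T | j + 1 ∈ G} ≤ #G :=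
    card_le_card_of_injOn (· + 1) (fun j hj => (mem_filter.1 hj).2)
      fun _ _ _ _ h => by simpa using h
  have hT : #T = 3 * N := by
    simp only [T, Int.card_Icc]
    omega
  have := (card_le_card hcover).trans
    ((card_union_le _ _).trans (add_le_add_left (card_union_le _ _) _))
  have : (3 * N : ℝ) ≤ #B + #G + #G := by exact_mod_cast (hT ▸ this).trans (by omega)
  linarith

noncomputable def nonflatRows (N : ℕ) (θ : ℝ) : Finset ℤ :=
  {k ∈ Icc (N : ℤ) (3 * N) | 1 / (2 * N) ≤ distToInt (θ * k)}

theorem distToInt_lt_of_notMem_nonflatRows {N : ℕ} {θ : ℝ} {k : ℤ}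
    (hk : k ∈ Icc (N : ℤ) (3 * N)) (hk' : k ∉ nonflatRows N θ) :
    distToInt (θ * k) < 1 / (2 * N) :=
  not_le.1 fun h => hk' (mem_filter.2 ⟨hk, h⟩)

theorem distToInt_mul_lt_of_card_nonflatRows_lt {N : ℕ} (hN : 2 ≤ N) {θ : ℝ}
    (hcard : 4 * #(nonflatRows N θ) < N) {d : ℕ} (hd : d ≤ 4) :
    distToInt (θ * d) < 1 / N := by
  set F := nonflatRows N θ
  have hlt : #(F ∪ F.image (· - (d : ℤ))) < #(Icc (N : ℤ) (3 * N - d)) := by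
    have := card_union_le F (F.image (· - (d : ℤ)))
    have := card_image_le (s := F) (f := (· - (d : ℤ)))
    rw [Int.card_Icc]
    omega
  obtain ⟨k, hk, hkF⟩ := exists_mem_notMem_of_card_lt_card hlt
  obtain ⟨hk₀, hk₁⟩ := mem_Icc.1 hk
  have h₀ := distToInt_lt_of_notMem_nonflatRows (mem_Icc.2 ⟨hk₀, by omega⟩)
    fun h => hkF (mem_union_left _ h)
  have h₁ := distToInt_lt_of_notMem_nonflatRows (θ := θ) (k := k + d)
    (mem_Icc.2 ⟨by omega, by omega⟩) fun h => hkF (mem_union_right _ (mem_image.2 ⟨_, h, by ring⟩))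
  have := distToInt_sub_le (θ * ↑(k + d)) (θ * k)
  have hN0 : (0 : ℝ) < N := by positivity
  rw [show θ * ↑(k + d) - θ * k = θ * d by push_cast; ring] at this
  have : 1 / (2 * (N : ℝ)) + 1 / (2 * N) = 1 / N := by field_simp; ring
  linarith

theorem lt_of_card_nonflatRows_lt {N : ℕ} (hN : 4 ≤ N) {θ : ℝ} (hθ : 0 < θ) (hθ' : θ ≤ 1 / 2)
    (hcard : 4 * #(nonflatRows N θ) < N) : θ < 1 / (5 * (N : ℝ) ^ 2) := by
  have hN4 : (4 : ℝ) ≤ N := by exact_mod_cast hN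
  have hNinv : 1 / (N : ℝ) ≤ 1 / 4 := one_div_le_one_div_of_le (by norm_num) hN4
  have hd (d : ℕ) (hd : d ≤ 4) (h : θ * d + 1 / N ≤ 1) : θ * d < 1 / N :=
    lt_of_distToInt_lt (by positivity) h
      (distToInt_mul_lt_of_card_nonflatRows_lt (by omega) hcard hd)
  have h₁ : θ < 1 / N := by simpa using hd 1 (by norm_num) (by push_cast; linarith)
  have h₂ : θ * 2 < 1 / N := by simpa using hd 2 (by norm_num) (by push_cast; linarith)
  have h₄ : θ * 4 < 1 / N := by simpa using hd 4 (by norm_num) (by push_cast; linarith)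
  set F := nonflatRows N θ
  have hlt : #F < #(Icc (3 * N - (N / 4 : ℕ) : ℤ) (3 * N)) := by
    rw [Int.card_Icc]
    omega
  obtain ⟨k, hk, hkF⟩ := exists_mem_notMem_of_card_lt_card hlt
  obtain ⟨hk₀, hk₁⟩ := mem_Icc.1 hk
  have hkN : 11 * (N : ℝ) / 4 ≤ k := by
    have : ((11 * N : ℕ) : ℝ) ≤ ((4 * k : ℤ) : ℝ) := by exact_mod_cast (by omega)
    push_cast at this
    linarith
  have hk3 : (k : ℝ) ≤ 3 * N := by exact_mod_cast hk₁
  have hθk : θ * k < 1 / (2 * N) := by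
    have hk0 : (0 : ℝ) ≤ k := by exact_mod_cast (by omega : (0 : ℤ) ≤ k)
    refine lt_of_distToInt_lt (mul_nonneg hθ.le hk0) ?_
      (distToInt_lt_of_notMem_nonflatRows (mem_Icc.2 ⟨by omega, hk₁⟩) hkF)
    have : θ * k * 4 ≤ 3 * N * (θ * 4) := by nlinarith
    have : N * (θ * 4) < 1 := by rwa [lt_div_iff₀ (by positivity), mul_comm] at h₄
    have : 1 / (2 * (N : ℝ)) ≤ 1 / 8 := by
      rw [div_le_div_iff₀ (by positivity) (by norm_num)]; linarith
    nlinarith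
  rw [lt_div_iff₀ (by positivity)] at hθk ⊢
  nlinarith

/-- Lemma A.5: for `ε/N³ ≤ θ ≤ 1/2`, at least `N²/32` of the pairs `(k,j)` with
`N ≤ k ≤ 3N`, `N ≤ j ≤ 4N` satisfy `ε/8 < {θ·a₂(k,j)} < 1 - ε/8`, where
`a₂(k,j) = kj(k+j)/2`. -/
theorem stmt9 (N : ℕ) (hN : 4 ≤ N) (ε : ℝ) (hε : 0 < ε) (hε' : ε ≤ 1 / 32)
    (θ : ℝ) (hθ : ε / (N : ℝ) ^ 3 ≤ θ) (hθ' : θ ≤ 1 / 2) :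
    (N : ℝ) ^ 2 / 32 ≤
      ({p : ℤ × ℤ | (N : ℤ) ≤ p.1 ∧ p.1 ≤ 3 * N ∧ (N : ℤ) ≤ p.2 ∧ p.2 ≤ 4 * N ∧
        ε / 8 < Int.fract (θ * (((p.1 * p.2 * (p.1 + p.2) : ℤ) : ℝ) / 2)) ∧
        Int.fract (θ * (((p.1 * p.2 * (p.1 + p.2) : ℤ) : ℝ) / 2)) < 1 - ε / 8}.ncard : ℝ) := by
  have hN4 : (4 : ℝ) ≤ N := by exact_mod_cast hN
  have hθ₀ : 0 < θ := (by positivity : 0 < ε / (N : ℝ) ^ 3).trans_le hθ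
  have hblock := le_card_initialBlock N
  rw [ncard_eq_sum_card_goodRow, Nat.cast_sum]
  rcases le_or_gt θ (1 / (2 * (N : ℝ) ^ 3)) with hθ₁ | hθ₁
  · have := mul_le_sum_card_goodRow (initialBlock_subset N) fun k hk => hblock.trans
      (Nat.cast_le.2 (card_le_card (initialBlock_subset_goodRow (by omega) hε hε' hθ hθ₁ hk)))
    nlinarith
  rcases le_or_gt θ (1 / (5 * (N : ℝ) ^ 2)) with hθ₂ | hθ₂
  · have := mul_le_sum_card_goodRow (initialBlock_subset N) fun k hk =>
      half_le_card_goodRow_of_theta_mem_Ioc hN hε hε' hθ₁ hθ₂ (bounds_of_mem_initialBlock hk).1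
        (bounds_of_mem_initialBlock hk).2
    nlinarith
  have hcard : (N : ℝ) ≤ 4 * #(nonflatRows N θ) := by
    by_contra! h
    exact (lt_of_card_nonflatRows_lt hN hθ₀ hθ' (by exact_mod_cast h)).not_gt hθ₂
  have := mul_le_sum_card_goodRow (K := nonflatRows N θ) (filter_subset _ _) fun k hk =>
    half_le_card_goodRow_of_le_distToInt hN hε hε' (mem_filter.1 hk).2
  nlinarith
end

section
/- Let r ∈ ℕ with r ≥ 2, 0 < ε ≤ 1/32, and ν_r := r(r+1)/2. Then for any integer N ≥ 4 and any real θ with ε·N^{−ν_r} ≤ θ ≤ 1/2, the number of lattice points k ∈ Λ_{N,r} := {k ∈ ℤ^r : N ≤ k_j ≤ (j+2)N for all 1 ≤ j ≤ r} satisfying 2^{−ν_r}·ε < {θ · a_r(k)} < 1 − 2^{−ν_r}·ε is at least N^r/32. -/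
/-!
As a function of its last variable, `a_{q+1}(k', t)` is `a_q(k') / (q+1)!` times a product of
`q + 1` monic linear factors, so its `(q+1)`-st forward difference with step `b` is the constant
`a_q(k') b^{q+1}`. Write `‖x‖` for the distance from `x` to the nearest integer (the norm on
`UnitAddCircle`). If `‖θ a_{q+1}(k', t + u b)‖ ≤ δ` for all `u ≤ q + 1`, the difference gives
`‖θ a_q(k')‖ b^{q+1} ≤ 2^{q+1} δ` whenever the left side is at most `1/2`. The steps `b` for which
`2^{q+1} δ < ‖θ a_q(k')‖ b^{q+1} ≤ 1/2` contain a whole dyadic range `[b₀, 2b₀)` with `b₀ ≤ N`,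
so a segment of `(q+2)N` values of `t` can be cut into progressions of `q+2` terms with such steps,
and above every `k'` with `‖θ a_q(k')‖ N^{q+1} > 2^{q+1} δ` lie at least `N` good points. Induction
on `r`, feeding `ε N^{-(q+1)}` into the induction hypothesis, yields `N^r/32` good points; the base
case `r = 1` is direct.
-/

open Finset

open Function
open scoped fwdDiff Nat

theorem fwdDiff_iter_eq_fwdDiff_iter_one {R G : Type*} [CommRing R] [AddCommGroup G]
    (f : R → G) (h y : R) (n : ℕ) :
    Δ_[h] ^[n] f y = Δ_[1] ^[n] (fun u ↦ f (y + u * h)) 0 := by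
  simp [fwdDiff_iter_eq_sum_shift]

theorem fwdDiff_iter_prod_add_mul {R : Type*} [CommRing R] (c : ℕ → R) (h : R) (n : ℕ) :
    Δ_[1] ^[n] (fun u : R ↦ ∏ l ∈ range n, (c l + u * h)) = fun _ ↦ n ! * h ^ n := by
  have hexpand : (fun u : R ↦ ∏ l ∈ range n, (c l + u * h)) =
      ∑ S ∈ (range n).powerset, ((∏ l ∈ S, c l) * h ^ (n - #S)) • fun u : R ↦ u ^ (n - #S) := by
    funext u
    simp only [prod_add, Finset.sum_apply, Pi.smul_apply, smul_eq_mul, prod_const]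
    refine sum_congr rfl fun S hS ↦ ?_
    rw [card_sdiff_of_subset (mem_powerset.mp hS), card_range, mul_pow]
    ring
  rw [hexpand, fwdDiff_iter_finsetSum, sum_eq_single_of_mem ∅ (empty_mem_powerset _)]
  · funext u
    simp [fwdDiff_iter_eq_factorial, mul_comm]
  · intro S hS hne
    have hcard : n - #S < n := by
      have := card_le_card (mem_powerset.mp hS)
      have := card_pos.mpr (nonempty_iff_ne_empty.mpr hne)
      simp only [card_range] at *
      omega
    rw [fwdDiff_iter_const_smul, fwdDiff_iter_pow_eq_zero_of_lt hcard, smul_zero]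

theorem fwdDiff_iter_prod_add {R : Type*} [CommRing R] (c : ℕ → R) (h y : R) (n : ℕ) :
    Δ_[h] ^[n] (fun x : R ↦ ∏ l ∈ range n, (c l + x)) y = n ! * h ^ n := by
  rw [fwdDiff_iter_eq_fwdDiff_iter_one]
  simp_rw [← add_assoc]
  rw [fwdDiff_iter_prod_add_mul]

theorem fwdDiff_iter_comp_addMonoidHom {M G H : Type*} [AddCommMonoid M] [AddCommGroup G]
    [AddCommGroup H] (g : G →+ H) (f : M → G) (h : M) (n : ℕ) :
    Δ_[h] ^[n] (g ∘ f) = g ∘ Δ_[h] ^[n] f := by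
  funext y
  simp [fwdDiff_iter_eq_sum_shift, map_sum, map_zsmul]

theorem norm_fwdDiff_iter_le {M G : Type*} [AddCommMonoid M] [SeminormedAddCommGroup G]
    (f : M → G) (h y : M) (n : ℕ) {δ : ℝ} (hf : ∀ k ≤ n, ‖f (y + k • h)‖ ≤ δ) :
    ‖Δ_[h] ^[n] f y‖ ≤ 2 ^ n * δ := by
  rw [fwdDiff_iter_eq_sum_shift]
  calc ‖∑ k ∈ range (n + 1), ((-1 : ℤ) ^ (n - k) * n.choose k) • f (y + k • h)‖
      ≤ ∑ k ∈ range (n + 1), (n.choose k : ℝ) * δ := by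
        refine (norm_sum_le _ _).trans (sum_le_sum fun k hk ↦ ?_)
        refine (norm_zsmul_le _ _).trans ?_
        have hk' : k ≤ n := Nat.lt_succ_iff.mp (mem_range.mp hk)
        simpa using mul_le_mul_of_nonneg_left (hf k hk') (Nat.cast_nonneg _)
    _ = 2 ^ n * δ := by
        rw [← sum_mul, ← Nat.cast_sum, Nat.sum_range_choose, Nat.cast_pow, Nat.cast_ofNat]

theorem UnitAddCircle.lt_norm_coe_iff_s10 {δ x : ℝ} :
    δ < ‖(x : UnitAddCircle)‖ ↔ δ < Int.fract x ∧ Int.fract x < 1 - δ := by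
  rw [UnitAddCircle.norm_eq, abs_sub_round_eq_min, lt_min_iff, lt_sub_comm]

theorem UnitAddCircle.norm_coe_eq_abs {z : ℝ} (hz : |z| ≤ 1 / 2) : ‖(z : UnitAddCircle)‖ = |z| :=
  (AddCircle.norm_coe_eq_abs_iff (p := 1) one_ne_zero).mpr (by simpa using hz)

theorem UnitAddCircle.norm_nsmul_eq {n : ℕ} {u : UnitAddCircle} (h : n * ‖u‖ ≤ 1 / 2) :
    ‖n • u‖ = n * ‖u‖ := by
  induction u using QuotientAddGroup.induction_on with | H x => ?_
  have hx : (x : UnitAddCircle) = ↑(x - round x) := by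
    rw [AddCircle.coe_sub, ← zsmul_one, AddCircle.coe_zsmul, AddCircle.coe_period, smul_zero,
      sub_zero]
  have h1 : |x - round x| ≤ 1 / 2 := abs_sub_round x
  have hnorm : ‖(x : UnitAddCircle)‖ = |x - round x| := by rw [hx, UnitAddCircle.norm_coe_eq_abs h1]
  rw [hnorm] at h ⊢
  rw [hx, ← AddCircle.coe_nsmul, nsmul_eq_mul,
    UnitAddCircle.norm_coe_eq_abs (by rwa [abs_mul, Nat.abs_cast]), abs_mul, Nat.abs_cast]

def Fin.extendByZero {r : ℕ} (y : Fin r → ℝ) (n : ℕ) : ℝ := if h : n < r then y ⟨n, h⟩ else 0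

theorem Fin.extendByZero_snoc_of_lt {q n : ℕ} (y : Fin q → ℝ) (t : ℝ) (hn : n < q) :
    extendByZero (snoc y t : Fin (q + 1) → ℝ) n = extendByZero y n := by
  simp only [extendByZero, dif_pos hn, dif_pos (hn.trans q.lt_succ_self)]
  exact snoc_castSucc (α := fun _ ↦ ℝ) t y ⟨n, hn⟩

theorem Fin.extendByZero_snoc_self {q : ℕ} (y : Fin q → ℝ) (t : ℝ) :
    extendByZero (snoc y t : Fin (q + 1) → ℝ) q = t := by
  simp only [extendByZero, dif_pos q.lt_succ_self]
  exact snoc_last (α := fun _ ↦ ℝ) t y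

theorem hpoly_eq_prod_range (r : ℕ) (y : Fin r → ℝ) :
    hpoly r y = ∏ j ∈ range r, ∏ l ∈ range (j + 1), ∑ i ∈ Icc l j, Fin.extendByZero y i := by
  rw [hpoly, prod_sigma']
  refine prod_bij (fun p _ ↦ ⟨p.2, p.1⟩) ?_ ?_ ?_ ?_
  · intro p hp
    simp only [mem_filter, mem_univ, true_and] at hp
    simp only [mem_sigma, mem_range]
    exact ⟨p.2.isLt, Nat.lt_succ_of_le hp⟩
  · intro p _ p' _ h
    simp only [Sigma.mk.inj_iff, heq_eq_eq] at h
    exact Prod.ext (Fin.ext h.2) (Fin.ext h.1)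
  · rintro ⟨j, l⟩ h
    simp only [mem_sigma, mem_range] at h
    refine ⟨(⟨l, by omega⟩, ⟨j, h.1⟩), ?_, rfl⟩
    simp only [mem_filter, mem_univ, true_and, Fin.mk_le_mk]
    omega
  · intro p _
    rw [← Fin.map_valEmbedding_Icc, sum_map]
    exact sum_congr rfl fun i _ ↦ by simp [Fin.extendByZero]

theorem hpoly_snoc_s10 (q : ℕ) (y : Fin q → ℝ) (t : ℝ) :
    hpoly (q + 1) (Fin.snoc y t) =
      hpoly q y * ∏ l ∈ range (q + 1), (∑ i ∈ Ico l q, Fin.extendByZero y i + t) := by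
  rw [hpoly_eq_prod_range, hpoly_eq_prod_range, prod_range_succ]
  congr 1
  · refine prod_congr rfl fun j hj ↦ prod_congr rfl fun l _ ↦ sum_congr rfl fun i hi ↦ ?_
    exact Fin.extendByZero_snoc_of_lt y t ((mem_Icc.mp hi).2.trans_lt (mem_range.mp hj))
  · refine prod_congr rfl fun l hl ↦ ?_
    rw [← Ico_add_one_right_eq_Icc, sum_Ico_succ_top (Nat.lt_succ_iff.mp (mem_range.mp hl)),
      Fin.extendByZero_snoc_self]
    congr 1
    exact sum_congr rfl fun i hi ↦ Fin.extendByZero_snoc_of_lt y t (mem_Ico.mp hi).2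

theorem apoly_snoc (q : ℕ) (y : Fin q → ℝ) (t : ℝ) :
    apoly (q + 1) (Fin.snoc y t) =
      apoly q y / (q + 1)! * ∏ l ∈ range (q + 1), (∑ i ∈ Ico l q, Fin.extendByZero y i + t) := by
  have hc : crconst (q + 1) = crconst q * (q + 1)! := prod_range_succ _ _
  rw [apoly, apoly, hpoly_snoc_s10, hc, Nat.cast_mul]
  ring

theorem apoly_zero (y : Fin 0 → ℝ) : apoly 0 y = 1 := by
  simp [apoly, hpoly, crconst]

theorem apoly_one (y : Fin 1 → ℝ) : apoly 1 y = y 0 := by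
  simp [apoly, hpoly, crconst, Fintype.prod_prod_type]

theorem fwdDiff_iter_apoly_snoc (q : ℕ) (y : Fin q → ℝ) (h t : ℝ) :
    Δ_[h] ^[q + 1] (fun t ↦ apoly (q + 1) (Fin.snoc y t)) t = apoly q y * h ^ (q + 1) := by
  have hfun : (fun t ↦ apoly (q + 1) (Fin.snoc y t)) = (apoly q y / (q + 1)!) •
      fun t ↦ ∏ l ∈ range (q + 1), (∑ i ∈ Ico l q, Fin.extendByZero y i + t) := by
    funext t
    rw [apoly_snoc, Pi.smul_apply, smul_eq_mul]
  rw [hfun, fwdDiff_iter_const_smul, Pi.smul_apply, fwdDiff_iter_prod_add, smul_eq_mul]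
  field_simp

theorem exists_lt_norm_apoly_snoc {q : ℕ} (θ δ : ℝ) (y : Fin q → ℝ) (b : ℕ) (t : ℝ)
    (hlow : 2 ^ (q + 1) * δ < b ^ (q + 1) * ‖(↑(θ * apoly q y) : UnitAddCircle)‖)
    (hhigh : b ^ (q + 1) * ‖(↑(θ * apoly q y) : UnitAddCircle)‖ ≤ 1 / 2) :
    ∃ u ≤ q + 1, δ < ‖(↑(θ * apoly (q + 1) (Fin.snoc y (t + u * b))) : UnitAddCircle)‖ := by
  by_contra! hbad
  let f : ℝ → ℝ := fun s ↦ θ * apoly (q + 1) (Fin.snoc y s)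
  have hdiff : Δ_[(b : ℝ)] ^[q + 1] (QuotientAddGroup.mk ∘ f : ℝ → UnitAddCircle) t =
      (b ^ (q + 1)) • (↑(θ * apoly q y) : UnitAddCircle) := by
    have hcomp := congrFun (fwdDiff_iter_comp_addMonoidHom
      (QuotientAddGroup.mk' (AddSubgroup.zmultiples (1 : ℝ))) f (b : ℝ) (q + 1)) t
    simp only [QuotientAddGroup.coe_mk'] at hcomp
    rw [hcomp]
    have hf : f = θ • fun s ↦ apoly (q + 1) (Fin.snoc y s) := rfl
    simp only [comp_apply, hf, fwdDiff_iter_const_smul, Pi.smul_apply,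
      fwdDiff_iter_apoly_snoc, smul_eq_mul, ← AddCircle.coe_nsmul, nsmul_eq_mul]
    push_cast
    ring_nf
  have hbound := norm_fwdDiff_iter_le (QuotientAddGroup.mk ∘ f : ℝ → UnitAddCircle) (b : ℝ) t
    (q + 1) (fun u hu ↦ by simpa [nsmul_eq_mul] using hbad u hu)
  rw [hdiff, UnitAddCircle.norm_nsmul_eq (by exact_mod_cast hhigh)] at hbound
  push_cast at hbound
  linarith

theorem le_card_filter_Ico_of_forall_exists (P : ℤ → Prop) [DecidablePred P] (w b : ℕ)
    (hP : ∀ t, ∃ u < w, P (t + u * b)) (c : ℤ) : b ≤ #{t ∈ Ico c (c + w * b) | P t} := by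
  choose u hu hPu using hP
  let g : ℕ → ℤ := fun o ↦ c + o + u (c + o) * b
  have hmaps : ∀ o ∈ range b, g o ∈ {t ∈ Ico c (c + w * b) | P t} := by
    intro o ho
    have hob : (o : ℤ) < b := by exact_mod_cast mem_range.mp ho
    have huw : (u (c + o) : ℤ) + 1 ≤ w := by exact_mod_cast hu (c + o)
    have hnn : (0 : ℤ) ≤ u (c + o) * b := by positivity
    exact mem_filter.mpr
      ⟨mem_Ico.mpr ⟨by simp only [g]; omega, by simp only [g]; nlinarith⟩, hPu _⟩
  have hinj : Set.InjOn g (range b) := by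
    intro o₁ h₁ o₂ h₂ he
    have hmod : ∀ o ∈ (range b : Set ℕ), (g o - c) % b = o := fun o ho ↦ by
      have hob : (o : ℤ) < b := by exact_mod_cast mem_range.mp ho
      rw [show g o - c = o + u (c + o) * b by ring, Int.add_mul_emod_self_right,
        Int.emod_eq_of_lt (by positivity) hob]
    exact_mod_cast (hmod o₁ h₁).symm.trans (he ▸ hmod o₂ h₂)
  calc b = #(range b) := (card_range b).symm
    _ ≤ _ := card_le_card_of_injOn g hmaps hinj

theorem le_card_filter_Ico_of_forall_exists_dyadic (P : ℤ → Prop) [DecidablePred P]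
    (w b₀ : ℕ) (hb₀ : 0 < b₀) (hP : ∀ b, b₀ ≤ b → b < 2 * b₀ → ∀ t, ∃ u < w, P (t + u * b))
    (M : ℕ) (hM : b₀ ≤ M) (c : ℤ) : M ≤ #{t ∈ Ico c (c + w * M) | P t} := by
  induction M using Nat.strong_induction_on generalizing c with
  | _ M ih =>
  by_cases hM2 : M < 2 * b₀
  · exact le_card_filter_Ico_of_forall_exists P w M (hP M hM hM2) c
  have hsplit : Ico c (c + w * M) =
      Ico c (c + w * b₀) ∪ Ico (c + w * b₀) (c + w * b₀ + w * ↑(M - b₀)) := by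
    rw [Ico_union_Ico_eq_Ico (by nlinarith) (by push_cast [Nat.cast_sub hM]; nlinarith)]
    push_cast [Nat.cast_sub hM]
    ring_nf
  rw [hsplit, filter_union, card_union_of_disjoint
    (disjoint_filter_filter (Ico_disjoint_Ico_consecutive _ _ _))]
  have h1 := le_card_filter_Ico_of_forall_exists P w b₀ (hP b₀ le_rfl (by omega)) c
  have h2 := ih (M - b₀) (by omega) (by omega) (c + w * b₀)
  omega

theorem exists_dyadic_scale {x δ : ℝ} {n N : ℕ} (hx₀ : 0 ≤ x) (hx : x ≤ 1 / 2) (hN₀ : 0 < N)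
    (hN : δ < N ^ n * x) (h3 : 3 ^ n * δ ≤ 1 / 2) :
    ∃ b₀, 0 < b₀ ∧ b₀ ≤ N ∧ ∀ b : ℕ, b₀ ≤ b → b < 2 * b₀ → δ < b ^ n * x ∧ b ^ n * x ≤ 1 / 2 := by
  classical
  have hex : ∃ m : ℕ, δ < ((m + 1 : ℕ) : ℝ) ^ n * x := ⟨N - 1, by rwa [Nat.sub_add_cancel hN₀]⟩
  obtain ⟨hm, hmin⟩ := (Nat.find_eq_iff hex).mp rfl
  set m := Nat.find hex
  refine ⟨m + 1, m.succ_pos, ?_, fun b hb₁ hb₂ ↦ ⟨?_, ?_⟩⟩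
  · have := Nat.find_min' hex (m := N - 1) (by rwa [Nat.sub_add_cancel hN₀])
    omega
  · refine hm.trans_le (mul_le_mul_of_nonneg_right (pow_le_pow_left₀ (by positivity) ?_ n) hx₀)
    exact_mod_cast hb₁
  · rcases m.eq_zero_or_pos with hm0 | hmpos
    · obtain rfl : b = 1 := by omega
      simpa using hx
    · have hprev : ((m - 1 + 1 : ℕ) : ℝ) ^ n * x ≤ δ := not_lt.mp (hmin _ (by omega))
      rw [Nat.sub_add_cancel hmpos] at hprev
      have hb : (b : ℝ) ≤ 3 * m := by exact_mod_cast (by omega : b ≤ 3 * m)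
      calc (b : ℝ) ^ n * x ≤ (3 * m) ^ n * x :=
            mul_le_mul_of_nonneg_right (pow_le_pow_left₀ (by positivity) hb n) hx₀
        _ = 3 ^ n * ((m : ℝ) ^ n * x) := by ring
        _ ≤ 3 ^ n * δ := mul_le_mul_of_nonneg_left hprev (by positivity)
        _ ≤ 1 / 2 := h3

theorem le_card_filter_Ico_lt_norm_apoly_snoc {q : ℕ} (θ δ : ℝ) (y : Fin q → ℝ) {N : ℕ}
    (hN : 0 < N) (hlow : 2 ^ (q + 1) * δ < N ^ (q + 1) * ‖(↑(θ * apoly q y) : UnitAddCircle)‖)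
    (h3 : 3 ^ (q + 1) * (2 ^ (q + 1) * δ) ≤ 1 / 2) (c : ℤ) :
    N ≤ #{t ∈ Ico c (c + (q + 2) * N) |
      δ < ‖(↑(θ * apoly (q + 1) (Fin.snoc y ((t : ℤ) : ℝ))) : UnitAddCircle)‖} := by
  have hhalf : ‖(↑(θ * apoly q y) : UnitAddCircle)‖ ≤ 1 / 2 := by
    simpa using AddCircle.norm_le_half_period (p := (1 : ℝ)) (x := ↑(θ * apoly q y)) one_ne_zero
  obtain ⟨b₀, hb₀, hb₀N, hwindow⟩ := exists_dyadic_scale (norm_nonneg _) hhalf hN hlow h3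
  refine le_card_filter_Ico_of_forall_exists_dyadic _ (q + 2) b₀ hb₀ (fun b h₁ h₂ t ↦ ?_) N hb₀N c
  obtain ⟨u, hu, hgood⟩ :=
    exists_lt_norm_apoly_snoc θ δ y b t (hwindow b h₁ h₂).1 (hwindow b h₁ h₂).2
  exact ⟨u, by omega, by push_cast; exact hgood⟩

noncomputable def latticeBox (r N : ℕ) : Finset (Fin r → ℤ) :=
  Fintype.piFinset fun j ↦ Icc (N : ℤ) (((j : ℕ) + 3) * N)

theorem snoc_mem_latticeBox {q N : ℕ} {kh : Fin q → ℤ} (hkh : kh ∈ latticeBox q N) {t : ℤ}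
    (ht : t ∈ Ico (N : ℤ) (N + (q + 2) * N)) :
    (Fin.snoc kh t : Fin (q + 1) → ℤ) ∈ latticeBox (q + 1) N := by
  rw [latticeBox, Fintype.mem_piFinset] at hkh ⊢
  intro j
  induction j using Fin.lastCases with
  | last =>
    obtain ⟨h₁, h₂⟩ := mem_Ico.mp ht
    rw [Fin.snoc_last, mem_Icc, Fin.val_last]
    constructor <;> linarith
  | cast i => simpa using hkh i

theorem card_mul_le_card_filter_latticeBox_succ {q N m : ℕ} {A : Finset (Fin q → ℤ)}
    (hA : A ⊆ latticeBox q N) (P : (Fin (q + 1) → ℤ) → Prop) [DecidablePred P]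
    (hm : ∀ kh ∈ A, m ≤ #{t ∈ Ico (N : ℤ) (N + (q + 2) * N) | P (Fin.snoc kh t)}) :
    #A * m ≤ #{k ∈ latticeBox (q + 1) N | P k} := by
  calc #A * m ≤ ∑ kh ∈ A, #{t ∈ Ico (N : ℤ) (N + (q + 2) * N) | P (Fin.snoc kh t)} := by
        rw [← smul_eq_mul]; exact card_nsmul_le_sum _ _ _ hm
    _ = #(A.sigma fun kh ↦ {t ∈ Ico (N : ℤ) (N + (q + 2) * N) | P (Fin.snoc kh t)}) :=
        (card_sigma _ _).symm
    _ ≤ #{k ∈ latticeBox (q + 1) N | P k} := by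
        refine card_le_card_of_injOn (fun p ↦ Fin.snoc p.1 p.2) (fun p hp ↦ ?_) ?_
        · obtain ⟨hp₁, hp₂⟩ := mem_sigma.mp hp
          obtain ⟨ht, hP⟩ := mem_filter.mp hp₂
          exact mem_filter.mpr ⟨snoc_mem_latticeBox (hA hp₁) ht, hP⟩
        · rintro ⟨kh, t⟩ - ⟨kh', t'⟩ - h
          obtain ⟨rfl, rfl⟩ := Fin.snoc_injective2 h
          rfl

theorem card_filter_latticeBox_mul_le {q N : ℕ} (hN : 0 < N) (θ δ : ℝ)
    (h3 : 3 ^ (q + 1) * (2 ^ (q + 1) * δ) ≤ 1 / 2) :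
    #{kh ∈ latticeBox q N |
        2 ^ (q + 1) * δ < N ^ (q + 1) * ‖(↑(θ * apoly q fun i ↦ (kh i : ℝ)) : UnitAddCircle)‖} * N ≤
      #{k ∈ latticeBox (q + 1) N |
        δ < ‖(↑(θ * apoly (q + 1) fun i ↦ (k i : ℝ)) : UnitAddCircle)‖} := by
  refine card_mul_le_card_filter_latticeBox_succ (filter_subset _ _) _ fun kh hkh ↦ ?_
  have hcast : ∀ t : ℤ, (fun i ↦ ((Fin.snoc kh t : Fin (q + 1) → ℤ) i : ℝ)) =
      Fin.snoc (fun i ↦ (kh i : ℝ)) (t : ℝ) := fun t ↦ Fin.comp_snoc _ kh t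
  simp only [hcast]
  exact le_card_filter_Ico_lt_norm_apoly_snoc θ δ _ hN (mem_filter.mp hkh).2 h3 _

theorem triangle_number_succ (q : ℕ) : (q + 1) * (q + 1 + 1) / 2 = q * (q + 1) / 2 + (q + 1) := by
  rw [show (q + 1) * (q + 1 + 1) = q * (q + 1) + (q + 1) * 2 by ring,
    Nat.add_mul_div_right _ _ two_pos]

theorem three_pow_mul_div_two_pow_le (q : ℕ) {ε : ℝ} (hε : 0 ≤ ε) (hε' : ε ≤ 1 / 32) :
    3 ^ (q + 1) * (ε / 2 ^ (q * (q + 1) / 2)) ≤ 1 / 2 := by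
  have hexp : 2 * (q + 1) ≤ q * (q + 1) / 2 + 4 := by
    have h := Nat.div_mul_cancel (Nat.even_mul_succ_self q).two_dvd
    generalize q * (q + 1) / 2 = m at h ⊢
    zify at h ⊢
    nlinarith [sq_nonneg ((q : ℤ) - 2)]
  have hpow : (3 : ℝ) ^ (q + 1) ≤ 2 ^ (q * (q + 1) / 2) * 2 ^ 4 :=
    calc (3 : ℝ) ^ (q + 1) ≤ 4 ^ (q + 1) := pow_le_pow_left₀ (by norm_num) (by norm_num) _
      _ = 2 ^ (2 * (q + 1)) := by rw [pow_mul]; norm_num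
      _ ≤ 2 ^ (q * (q + 1) / 2 + 4) := pow_le_pow_right₀ (by norm_num) hexp
      _ = _ := pow_add _ _ _
  calc 3 ^ (q + 1) * (ε / 2 ^ (q * (q + 1) / 2))
      ≤ 2 ^ (q * (q + 1) / 2) * 2 ^ 4 * (ε / 2 ^ (q * (q + 1) / 2)) := by gcongr
    _ = 16 * ε := by field_simp; ring
    _ ≤ 1 / 2 := by linarith

theorem le_card_filter_latticeBox_one {N : ℕ} (hN : 0 < N) {ε θ : ℝ} (hε : 0 < ε)
    (hε' : ε ≤ 1 / 32) (hθ : ε / N ≤ θ) (hθ' : θ ≤ 1 / 2) :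
    (N : ℝ) / 32 ≤
      #{k ∈ latticeBox 1 N | ε / 2 < ‖(↑(θ * apoly 1 fun i ↦ (k i : ℝ)) : UnitAddCircle)‖} := by
  have hN' : (0 : ℝ) < N := by exact_mod_cast hN
  have hεθ : ε ≤ θ * N := (div_le_iff₀ hN').mp hθ
  have hθ₀ : 0 ≤ θ := (div_nonneg hε.le hN'.le).trans hθ
  rcases le_or_gt (θ * N) ε with hsmall | hlarge
  · -- every lattice point qualifies, since `θ k ∈ [ε, 3ε]`
    rw [filter_true_of_mem fun k hk ↦ ?_]
    · have hcard : (3 * (N : ℤ) + 1 - N).toNat = 2 * N + 1 := by omega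
      simp only [latticeBox, Fintype.card_piFinset, Int.card_Icc, Finset.univ_unique,
        prod_singleton, Fin.default_eq_zero, Fin.val_zero, CharP.cast_eq_zero, zero_add, hcard]
      push_cast
      linarith
    · obtain ⟨hk₁, hk₂⟩ := mem_Icc.mp (Fintype.mem_piFinset.mp hk 0)
      have hk₁' : (N : ℝ) ≤ k 0 := by exact_mod_cast hk₁
      have hk₂' : (k 0 : ℝ) ≤ 3 * N := by exact_mod_cast (by simpa using hk₂)
      have hlo : ε ≤ θ * k 0 := hεθ.trans (by nlinarith)
      have hhi : θ * k 0 ≤ 3 * ε := by nlinarith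
      rw [apoly_one, UnitAddCircle.norm_coe_eq_abs (by rw [abs_of_nonneg] <;> linarith),
        abs_of_nonneg (by linarith)]
      linarith
  · have hstep := card_filter_latticeBox_mul_le (q := 0) hN θ (ε / 2) (by norm_num; linarith)
    have hθnorm : ‖(θ : UnitAddCircle)‖ = θ := by
      rw [UnitAddCircle.norm_coe_eq_abs (by rwa [abs_of_nonneg hθ₀]), abs_of_nonneg hθ₀]
    rw [filter_true_of_mem fun kh _ ↦ by norm_num [apoly_zero, hθnorm]; linarith] at hstep
    have hcard : #(latticeBox 0 N) = 1 := by simp [latticeBox]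
    rw [hcard, one_mul] at hstep
    calc (N : ℝ) / 32 ≤ N := by linarith
      _ ≤ _ := by exact_mod_cast hstep

theorem le_card_filter_latticeBox (r : ℕ) (hr : 1 ≤ r) {N : ℕ} (hN : 0 < N) {ε θ : ℝ}
    (hε : 0 < ε) (hε' : ε ≤ 1 / 32) (hθ : ε / (N : ℝ) ^ (r * (r + 1) / 2) ≤ θ) (hθ' : θ ≤ 1 / 2) :
    (N : ℝ) ^ r / 32 ≤ #{k ∈ latticeBox r N |
      ε / 2 ^ (r * (r + 1) / 2) < ‖(↑(θ * apoly r fun i ↦ (k i : ℝ)) : UnitAddCircle)‖} := by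
  induction r, hr using Nat.le_induction generalizing ε with
  | base => simpa using le_card_filter_latticeBox_one hN hε hε' (by simpa using hθ) hθ'
  | succ q _ ih =>
    have hNpow : (1 : ℝ) ≤ (N : ℝ) ^ (q + 1) := one_le_pow₀ (by exact_mod_cast hN)
    have hδ : 2 ^ (q + 1) * (ε / 2 ^ ((q + 1) * (q + 1 + 1) / 2)) = ε / 2 ^ (q * (q + 1) / 2) := by
      rw [triangle_number_succ]; field_simp; ring
    have hIH := ih (ε := ε / N ^ (q + 1)) (by positivity) ((div_le_self hε.le hNpow).trans hε')
      (by rwa [div_div, ← pow_add, add_comm, ← triangle_number_succ])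
    rw [filter_congr fun kh _ ↦ by rw [div_right_comm, ← hδ, div_lt_iff₀' (by positivity)]] at hIH
    have hstep := card_filter_latticeBox_mul_le hN θ _
      (by rw [hδ]; exact three_pow_mul_div_two_pow_le q hε.le hε')
    calc (N : ℝ) ^ (q + 1) / 32 = N ^ q / 32 * N := by ring
      _ ≤ _ := mul_le_mul_of_nonneg_right hIH N.cast_nonneg
      _ ≤ _ := by exact_mod_cast hstep

/-- Proposition 3.1: for `εN^{-ν_r} ≤ θ ≤ 1/2`, at least `N^r/32` of the lattice points
`k ∈ Λ_{N,r}` (i.e. `N ≤ k_j ≤ (j+2)N` in 1-indexed `j`) satisfy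
`2^{-ν_r}ε < {θ a_r(k)} < 1 - 2^{-ν_r}ε`, where `ν_r = r(r+1)/2`. -/
theorem stmt10 (r : ℕ) (hr : 2 ≤ r) (ε : ℝ) (hε : 0 < ε) (hε' : ε ≤ 1 / 32)
    (N : ℕ) (hN : 4 ≤ N) (θ : ℝ)
    (hθ : ε / (N : ℝ) ^ (r * (r + 1) / 2) ≤ θ) (hθ' : θ ≤ 1 / 2) :
    (N : ℝ) ^ r / 32 ≤
      ({k : Fin r → ℤ | (∀ j, (N : ℤ) ≤ k j ∧ k j ≤ ((j : ℕ) + 3) * N) ∧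
        ε / 2 ^ (r * (r + 1) / 2) < Int.fract (θ * apoly r (fun i => (k i : ℝ))) ∧
        Int.fract (θ * apoly r (fun i => (k i : ℝ)))
          < 1 - ε / 2 ^ (r * (r + 1) / 2)}.ncard : ℝ) := by
  convert le_card_filter_latticeBox r (by omega) (by omega : 0 < N) hε hε' hθ hθ' using 2
  rw [← Set.ncard_coe_finset]
  congr 1
  ext k
  simp [latticeBox, UnitAddCircle.lt_norm_coe_iff_s10, forall_and]
end

section
/- Let q₀ ∈ (0,1) and log(q₀) < x₀ < 0. Then there exists a constant C = C(x₀, q₀) > 0 such that for all real x ≥ x₀ and all q ∈ [0, q₀]: 0 ≤ log((1−q)/(1−e^{−x}q)) + xq/(1−q) ≤ C·x²q/(1−q)². -/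
/-!
Write `E = e^{-x}`. Both bounds come from `1 - 1/y ≤ log y ≤ y - 1` at `y = (1-q)/(1-Eq)`.
The lower one leaves `q (E - 1 + x)/(1-q) ≥ 0`. The upper one leaves
`q ((1-q)(E-1+x) + q x (1-E)) / ((1-Eq)(1-q))`, and both terms of the numerator are at most
`e^{-x₀} x²` when `x ≥ x₀`. The condition `x₀ > log q₀` is exactly what keeps the denominator
factor `1 - Eq ≥ 1 - e^{-x₀} q₀` away from zero.
-/

namespace Real

theorem exp_sub_one_sub_le_mul_exp_sub_one (y : ℝ) : exp y - 1 - y ≤ y * (exp y - 1) := by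
  have hinv : exp (-y) * exp y = 1 := by rw [← exp_add, neg_add_cancel, exp_zero]
  nlinarith [add_one_le_exp (-y), exp_pos y]

theorem mul_exp_sub_one_le (y : ℝ) : y * (exp y - 1) ≤ max 1 (exp y) * y ^ 2 := by
  rcases le_total 0 y with hy | hy
  · have h : exp y - 1 ≤ y * exp y := by linarith [exp_sub_one_sub_le_mul_exp_sub_one y]
    nlinarith [le_max_right 1 (exp y), mul_le_mul_of_nonneg_left h hy]
  · have h : 1 - exp y ≤ -y := by linarith [add_one_le_exp y]
    nlinarith [le_max_left 1 (exp y), mul_le_mul_of_nonneg_left h (neg_nonneg.2 hy)]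

theorem mul_exp_sub_one_le_of_le {y M : ℝ} (hM : 0 ≤ M) (hy : y ≤ M) :
    y * (exp y - 1) ≤ exp M * y ^ 2 := by
  have hmax : max 1 (exp y) ≤ exp M := max_le (one_le_exp hM) (exp_le_exp.2 hy)
  exact (mul_exp_sub_one_le y).trans (by gcongr)

end Real

open Real

section

variable {q E : ℝ}

theorem le_log_one_sub_div_one_sub_mul (hq : q < 1) (hEq : E * q < 1) :
    (E - 1) * q / (1 - q) ≤ log ((1 - q) / (1 - E * q)) := by
  have h1q : 0 < 1 - q := by linarith
  have hEq' : 0 < 1 - E * q := by linarith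
  have h := one_sub_inv_le_log_of_pos (div_pos h1q hEq')
  rw [inv_div] at h
  convert h using 1
  field_simp
  ring

theorem log_one_sub_div_one_sub_mul_le (hq : q < 1) (hEq : E * q < 1) :
    log ((1 - q) / (1 - E * q)) ≤ (E - 1) * q / (1 - E * q) := by
  have h1q : 0 < 1 - q := by linarith
  have hEq' : 0 < 1 - E * q := by linarith
  convert log_le_sub_one_of_pos (div_pos h1q hEq') using 1
  field_simp
  ring

end

section

variable {x q : ℝ}

theorem log_one_sub_div_add_nonneg (hq0 : 0 ≤ q) (hq1 : q < 1) (hEq : exp (-x) * q < 1) :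
    0 ≤ log ((1 - q) / (1 - exp (-x) * q)) + x * q / (1 - q) := by
  have h1q : 0 < 1 - q := by linarith
  have hexp : 0 ≤ exp (-x) - 1 + x := by linarith [add_one_le_exp (-x)]
  calc (0 : ℝ) ≤ (exp (-x) - 1 + x) * q / (1 - q) := by positivity
    _ = (exp (-x) - 1) * q / (1 - q) + x * q / (1 - q) := by ring
    _ ≤ _ := by gcongr; exact le_log_one_sub_div_one_sub_mul hq1 hEq

theorem log_one_sub_div_add_le {M : ℝ} (hM : 0 ≤ M) (hx : -M ≤ x) (hq0 : 0 ≤ q) (hq1 : q < 1)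
    (hEq : exp (-x) * q < 1) :
    log ((1 - q) / (1 - exp (-x) * q)) + x * q / (1 - q)
      ≤ exp M * x ^ 2 * q / ((1 - exp (-x) * q) * (1 - q)) := by
  set E := exp (-x)
  have h1q : 0 < 1 - q := by linarith
  have hEq' : 0 < 1 - E * q := by linarith
  have hy : -x ≤ M := by linarith
  have hquad := mul_exp_sub_one_le_of_le hM hy
  have hconvex : E - 1 + x ≤ exp M * x ^ 2 := by
    have := exp_sub_one_sub_le_mul_exp_sub_one (-x)
    rw [neg_sq] at hquad
    linarith
  have hmixed : x * (1 - E) ≤ exp M * x ^ 2 := by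
    rw [neg_sq] at hquad
    linarith
  calc log ((1 - q) / (1 - E * q)) + x * q / (1 - q)
      ≤ (E - 1) * q / (1 - E * q) + x * q / (1 - q) := by
        gcongr; exact log_one_sub_div_one_sub_mul_le hq1 hEq
    _ = q * ((1 - q) * (E - 1 + x) + q * (x * (1 - E))) / ((1 - E * q) * (1 - q)) := by
        field_simp; ring
    _ ≤ q * ((1 - q) * (exp M * x ^ 2) + q * (exp M * x ^ 2)) / ((1 - E * q) * (1 - q)) := by
        gcongr
    _ = exp M * x ^ 2 * q / ((1 - E * q) * (1 - q)) := by ring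

end

/-- Lemma 6.1: for `q₀ ∈ (0,1)` and `log q₀ < x₀ < 0`, there is `C = C(x₀,q₀) > 0` with
`0 ≤ log((1-q)/(1-e^{-x}q)) + xq/(1-q) ≤ C x² q/(1-q)²` for all `x ≥ x₀`, `q ∈ [0,q₀]`. -/
theorem stmt12 (q₀ x₀ : ℝ) (hq₀ : q₀ ∈ Set.Ioo (0 : ℝ) 1)
    (hx₀ : Real.log q₀ < x₀) (hx₀' : x₀ < 0) :
    ∃ C : ℝ, 0 < C ∧ ∀ x : ℝ, x₀ ≤ x → ∀ q : ℝ, q ∈ Set.Icc (0 : ℝ) q₀ →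
      0 ≤ Real.log ((1 - q) / (1 - Real.exp (-x) * q)) + x * q / (1 - q) ∧
      Real.log ((1 - q) / (1 - Real.exp (-x) * q)) + x * q / (1 - q)
        ≤ C * x ^ 2 * q / (1 - q) ^ 2 := by
  obtain ⟨hq₀0, hq₀1⟩ := hq₀
  have hδ : 0 < 1 - exp (-x₀) * q₀ := by
    have hq₀x₀ : q₀ < exp x₀ := (log_lt_iff_lt_exp hq₀0).1 hx₀
    have hinv : exp (-x₀) * exp x₀ = 1 := by rw [← exp_add, neg_add_cancel, exp_zero]
    nlinarith [exp_pos (-x₀)]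
  refine ⟨exp (-x₀) / (1 - exp (-x₀) * q₀), by positivity, fun x hx q ⟨hq0, hqq₀⟩ => ?_⟩
  have hq1 : q < 1 := hqq₀.trans_lt hq₀1
  have hEq : exp (-x) * q ≤ exp (-x₀) * q₀ :=
    mul_le_mul (exp_le_exp.2 (by linarith)) hqq₀ hq0 (exp_pos _).le
  have hden : (1 - exp (-x₀) * q₀) * (1 - q) ^ 2 ≤ (1 - exp (-x) * q) * (1 - q) := by
    rw [sq, ← mul_assoc]
    gcongr
    nlinarith
  refine ⟨log_one_sub_div_add_nonneg hq0 hq1 (by linarith),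
    (log_one_sub_div_add_le (neg_nonneg.2 hx₀'.le) (by linarith) hq0 hq1 (by linarith)).trans ?_⟩
  rw [div_mul_eq_mul_div, div_mul_eq_mul_div, div_div]
  gcongr
end
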